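/- arXiv:1204.6444 — 4 statements merged into one kernel-verified Lean document; each statement's English description precedes it below -/
import Mathlib

section
/- Let Ω ⊆ X be a bounded John domain with John center x₀ and John constant C_Ω. Set N = ⌊C_μ² (3 L C_Ω)^{log₂ C_μ}⌋. Then for every x ∈ ∂Ω and every r > 0 such that x₀ ∉ B(x, 3r), the ball B(x, r) intersects at most N connected components of B(x, 3r) ∩ Ω. In particular, Ω is finitely connected at every boundary point. -/
open Metric Set Filter Topology

/-- The distance between two subsets of a metric space
(infimum of pairwise distances, with `sInf ∅ = 0`). -/
noncomputable def setDist {X : Type*} [MetricSpace X] (A B : Set X) : ℝ :=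
  sInf {d : ℝ | ∃ a ∈ A, ∃ b ∈ B, d = dist a b}

/-- `Ω` is a bounded domain: bounded, nonempty, open, connected, and not all of `X`. -/
def BoundedDomain {X : Type*} [MetricSpace X] (Ω : Set X) : Prop :=
  IsOpen Ω ∧ IsConnected Ω ∧ Bornology.IsBounded Ω ∧ Ω ≠ Set.univ

/-- An acceptable set: a bounded connected set `E ⊊ Ω` whose closure meets `∂Ω`. -/
def Acceptable {X : Type*} [MetricSpace X] (Ω E : Set X) : Prop :=
  Bornology.IsBounded E ∧ IsConnected E ∧ E ⊆ Ω ∧ E ≠ Ω ∧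
    (closure E ∩ frontier Ω).Nonempty

/-- A chain in `Ω`: a nested sequence of acceptable sets whose consecutive
relative boundaries are at positive distance and whose impression
`⋂ k, closure (E k)` lies in `∂Ω`. -/
def IsChainIn {X : Type*} [MetricSpace X] (Ω : Set X) (E : ℕ → Set X) : Prop :=
  (∀ k, Acceptable Ω (E k)) ∧
  (∀ k, E (k + 1) ⊆ E k) ∧
  (∀ k, 0 < setDist (Ω ∩ frontier (E (k + 1))) (Ω ∩ frontier (E k))) ∧
  (⋂ k, closure (E k)) ⊆ frontier Ω

/-- A chain `E` divides a chain `F` if each `F k` contains some `E l`. -/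
def Divides {X : Type*} (E F : ℕ → Set X) : Prop := ∀ k, ∃ l, E l ⊆ F k

/-- Two chains are equivalent if each divides the other. -/
def EquivChains {X : Type*} (E F : ℕ → Set X) : Prop := Divides E F ∧ Divides F E

/-- A prime chain: a chain such that every chain dividing it is equivalent to it. -/
def IsPrimeChain {X : Type*} [MetricSpace X] (Ω : Set X) (E : ℕ → Set X) : Prop :=
  IsChainIn Ω E ∧ ∀ F : ℕ → Set X, IsChainIn Ω F → Divides F E → EquivChains F E

/-- A boundary point `x` is accessible if some curve in `Ω` ends at `x`. -/
def Accessible {X : Type*} [MetricSpace X] (Ω : Set X) (x : X) : Prop :=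
  ∃ γ : ℝ → X, ContinuousOn γ (Set.Icc 0 1) ∧ γ 1 = x ∧ γ '' Set.Ico 0 1 ⊆ Ω

/-- `Ω` is finitely connected at `x₀` if each ball around `x₀` contains an open
neighborhood `G` of `x₀` such that `G ∩ Ω` has finitely many components. -/
def FinitelyConnectedAt {X : Type*} [MetricSpace X] (Ω : Set X) (x₀ : X) : Prop :=
  ∀ r : ℝ, 0 < r → ∃ G : Set X, IsOpen G ∧ x₀ ∈ G ∧ G ⊆ Metric.ball x₀ r ∧
    {C : Set X | ∃ y ∈ G ∩ Ω, C = connectedComponentIn (G ∩ Ω) y}.Finite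

/-- `X` is `L`-quasiconvex: any two points are joined by a `1`-Lipschitz
(arc-length parameterized) curve of length at most `L` times their distance. -/
def QuasiconvexWith (X : Type*) [MetricSpace X] (L : ℝ) : Prop :=
  ∀ x y : X, ∃ l : ℝ, 0 ≤ l ∧ ∃ γ : ℝ → X,
    LipschitzOnWith 1 γ (Set.Icc 0 l) ∧ γ 0 = x ∧ γ l = y ∧ l ≤ L * dist x y

/-- `Ω` is a John domain with John center `x₀` and John constant `C`. -/
def JohnDomain {X : Type*} [MetricSpace X] (Ω : Set X) (x₀ : X) (C : ℝ) : Prop :=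
  x₀ ∈ Ω ∧ 1 ≤ C ∧ ∀ x ∈ Ω, ∃ l : ℝ, 0 ≤ l ∧ ∃ γ : ℝ → X,
    LipschitzOnWith 1 γ (Set.Icc 0 l) ∧ (∀ t ∈ Set.Icc 0 l, γ t ∈ Ω) ∧
    γ 0 = x ∧ γ l = x₀ ∧
    ∀ t ∈ Set.Icc 0 l, t ≤ C * Metric.infDist (γ t) Ωᶜ

section Aux

lemma aux_rpow_comm {a b : ℝ} (ha : 0 < a) (hb : 0 < b) :
    a ^ Real.logb 2 b = b ^ Real.logb 2 a := by
  rw [Real.rpow_def_of_pos ha, Real.rpow_def_of_pos hb, Real.logb, Real.logb]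
  ring_nf

lemma aux_arith (Cμ L CΩ : ℝ) (hCμ : 1 ≤ Cμ) (hL : 1 ≤ L) (hCΩ : 1 ≤ CΩ) :
    Cμ ^ (⌈Real.logb 2 (6*L*CΩ)⌉₊ : ℕ) ≤ Cμ ^ 2 * (3*L*CΩ) ^ Real.logb 2 Cμ := by
  have hCμ0 : (0:ℝ) < Cμ := lt_of_lt_of_le one_pos hCμ
  have h3 : (0:ℝ) < 3*L*CΩ := by nlinarith
  have h6 : (1:ℝ) ≤ 6*L*CΩ := by nlinarith
  have hlogb0 : 0 ≤ Real.logb 2 (6*L*CΩ) := Real.logb_nonneg one_lt_two h6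
  have hk : ((⌈Real.logb 2 (6*L*CΩ)⌉₊ : ℕ) : ℝ) ≤ Real.logb 2 (6*L*CΩ) + 1 :=
    le_of_lt (Nat.ceil_lt_add_one hlogb0)
  calc Cμ ^ (⌈Real.logb 2 (6*L*CΩ)⌉₊ : ℕ)
      = Cμ ^ ((⌈Real.logb 2 (6*L*CΩ)⌉₊ : ℕ) : ℝ) := (Real.rpow_natCast _ _).symm
    _ ≤ Cμ ^ (Real.logb 2 (6*L*CΩ) + 1) := Real.rpow_le_rpow_of_exponent_le hCμ hk
    _ = Cμ ^ Real.logb 2 (6*L*CΩ) * Cμ := by rw [Real.rpow_add hCμ0, Real.rpow_one]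
    _ = (6*L*CΩ) ^ Real.logb 2 Cμ * Cμ := by
        rw [aux_rpow_comm hCμ0 (by nlinarith : (0:ℝ) < 6*L*CΩ)]
    _ = (2 * (3*L*CΩ)) ^ Real.logb 2 Cμ * Cμ := by ring_nf
    _ = 2 ^ Real.logb 2 Cμ * (3*L*CΩ) ^ Real.logb 2 Cμ * Cμ := by
        rw [Real.mul_rpow (by norm_num) (le_of_lt h3)]
    _ = Cμ * (3*L*CΩ) ^ Real.logb 2 Cμ * Cμ := by
        rw [Real.rpow_logb two_pos (by norm_num) hCμ0]
    _ = Cμ ^ 2 * (3*L*CΩ) ^ Real.logb 2 Cμ := by ring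

lemma aux_dbl_iter {X : Type*} [MetricSpace X] [MeasurableSpace X]
    (μ : MeasureTheory.Measure X) (Cμ : ℝ)
    (hdbl : ∀ (x : X) (ρ : ℝ), 0 < ρ →
      μ (Metric.ball x (2 * ρ)) ≤ ENNReal.ofReal Cμ * μ (Metric.ball x ρ)) :
    ∀ (k : ℕ) (z : X) (ρ : ℝ), 0 < ρ →
      μ (Metric.ball z (2 ^ k * ρ)) ≤ (ENNReal.ofReal Cμ) ^ k * μ (Metric.ball z ρ) := by
  intro k
  induction k with
  | zero => intro z ρ hρ; simp
  | succ k ih =>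
    intro z ρ hρ
    have h1 : (2:ℝ) ^ (k+1) * ρ = 2 * (2 ^ k * ρ) := by ring
    have h2 : (0:ℝ) < 2 ^ k * ρ := by positivity
    calc μ (Metric.ball z (2 ^ (k+1) * ρ)) = μ (Metric.ball z (2 * (2 ^ k * ρ))) := by rw [h1]
      _ ≤ ENNReal.ofReal Cμ * μ (Metric.ball z (2 ^ k * ρ)) := hdbl z _ h2
      _ ≤ ENNReal.ofReal Cμ * ((ENNReal.ofReal Cμ) ^ k * μ (Metric.ball z ρ)) :=
          mul_le_mul_right (ih z ρ hρ) _
      _ = (ENNReal.ofReal Cμ) ^ (k+1) * μ (Metric.ball z ρ) := by ring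

lemma qc_ball_subset_component {X : Type*} [MetricSpace X] {L : ℝ} (hL : 1 ≤ L)
    (hqc : QuasiconvexWith X L) {F : Set X} {z : X} {ε : ℝ}
    (hball : Metric.ball z ε ⊆ F) :
    Metric.ball z (ε / L) ⊆ connectedComponentIn F z := by
  have hL0 : (0:ℝ) < L := lt_of_lt_of_le one_pos hL
  intro w hw
  obtain ⟨l, hl0, γ, hlip, hγ0, hγl, hlen⟩ := hqc z w
  have hd : dist z w < ε / L := by rwa [dist_comm, ← Metric.mem_ball]
  have hlε : l < ε := lt_of_le_of_lt hlen (by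
    calc L * dist z w < L * (ε / L) := (mul_lt_mul_iff_right₀ hL0).2 hd
      _ = ε := by field_simp)
  have himg : γ '' Set.Icc 0 l ⊆ F := by
    rintro _ ⟨t, ht, rfl⟩
    apply hball
    have : dist (γ t) (γ 0) ≤ t := by
      have := hlip.dist_le_mul t ⟨ht.1, ht.2⟩ 0 ⟨le_refl 0, hl0⟩
      simpa [Real.dist_eq, abs_of_nonneg ht.1] using this
    rw [Metric.mem_ball, ← hγ0]
    exact lt_of_le_of_lt (le_trans this ht.2) hlε
  have hconn : IsPreconnected (γ '' Set.Icc 0 l) :=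
    (isPreconnected_Icc).image γ hlip.continuousOn
  have hsub : γ '' Set.Icc 0 l ⊆ connectedComponentIn F z := by
    apply hconn.subset_connectedComponentIn _ himg
    exact ⟨0, ⟨le_refl 0, hl0⟩, hγ0⟩
  exact hsub ⟨l, ⟨hl0, le_refl l⟩, hγl⟩

lemma qc_component_isOpen {X : Type*} [MetricSpace X] {L : ℝ} (hL : 1 ≤ L)
    (hqc : QuasiconvexWith X L) {U : Set X} (hU : IsOpen U) (y : X) :
    IsOpen (connectedComponentIn U y) := by
  have hL0 : (0:ℝ) < L := lt_of_lt_of_le one_pos hL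
  rw [Metric.isOpen_iff]
  intro w hw
  have hwU : w ∈ U := connectedComponentIn_subset U y hw
  obtain ⟨ε, hε, hball⟩ := Metric.isOpen_iff.1 hU w hwU
  refine ⟨ε / L, by positivity, ?_⟩
  have h1 : Metric.ball w (ε / L) ⊆ connectedComponentIn U w :=
    qc_ball_subset_component hL hqc hball
  rwa [← connectedComponentIn_eq hw] at h1

lemma exists_center {X : Type*} [MetricSpace X] {L CΩ : ℝ} (hL : 1 ≤ L)
    (hqc : QuasiconvexWith X L) {Ω : Set X} {x₀ : X} (hJohn : JohnDomain Ω x₀ CΩ)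
    {x : X} {r : ℝ} (hr : 0 < r) (hx₀ : x₀ ∉ Metric.ball x (3*r))
    {C : Set X}
    (hC : ∃ y ∈ Metric.ball x (3*r) ∩ Ω, C = connectedComponentIn (Metric.ball x (3*r) ∩ Ω) y)
    (hmeet : (C ∩ Metric.ball x r).Nonempty) :
    ∃ z, dist z x ≤ 2*r ∧ Metric.ball z (r/(L*CΩ)) ⊆ C := by
  obtain ⟨hx₀Ω, hCΩ, hJ⟩ := hJohn
  have hCΩ0 : (0:ℝ) < CΩ := lt_of_lt_of_le one_pos hCΩ
  have hL0 : (0:ℝ) < L := lt_of_lt_of_le one_pos hL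
  obtain ⟨y₀, hy₀, hCeq⟩ := hC
  obtain ⟨y, hyC, hyball⟩ := hmeet
  have hCeq' : C = connectedComponentIn (Metric.ball x (3*r) ∩ Ω) y := by
    rw [hCeq]; exact connectedComponentIn_eq (hCeq ▸ hyC)
  have hyΩ : y ∈ Ω := by
    have := connectedComponentIn_subset (Metric.ball x (3*r) ∩ Ω) y₀ (hCeq ▸ hyC)
    exact this.2
  obtain ⟨l, hl0, γ, hlip, hγΩ, hγ0, hγl, hJohnCond⟩ := hJ y hyΩ
  set A : Set ℝ := Set.Icc 0 l ∩ {t | 2*r ≤ dist (γ t) x} with hA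
  have hlm : l ∈ A := by
    constructor
    · exact ⟨hl0, le_refl l⟩
    · show 2*r ≤ dist (γ l) x
      rw [hγl]
      have : ¬ dist x₀ x < 3*r := hx₀
      push_neg at this
      linarith
  have hAne : A.Nonempty := ⟨l, hlm⟩
  have hAbdd : BddBelow A := ⟨0, fun t ht => ht.1.1⟩
  have hlipd : LipschitzOnWith 1 (fun t => dist (γ t) x) (Set.Icc 0 l) := by
    intro s hs t ht
    calc edist (dist (γ s) x) (dist (γ t) x) ≤ edist (γ s) (γ t) := by
          rw [edist_dist, edist_dist]
          exact ENNReal.ofReal_le_ofReal (abs_dist_sub_le _ _ _)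
      _ ≤ 1 * edist s t := hlip hs ht
  obtain ⟨g, hg, hgeq⟩ := hlipd.extend_real
  have hAeq : A = Set.Icc 0 l ∩ g ⁻¹' Set.Ici (2*r) := by
    ext t
    simp only [hA, Set.mem_inter_iff, Set.mem_setOf_eq, Set.mem_preimage, Set.mem_Ici]
    constructor
    · rintro ⟨ht, h2⟩; exact ⟨ht, by rw [← hgeq ht]; exact h2⟩
    · rintro ⟨ht, h2⟩
      exact ⟨ht, by rw [show dist (γ t) x = g t from hgeq ht]; exact h2⟩
  have hAclosed : IsClosed A := by
    rw [hAeq]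
    exact isClosed_Icc.inter (isClosed_Ici.preimage hg.continuous)
  set t₀ := sInf A with ht₀
  have ht₀A : t₀ ∈ A := hAclosed.csInf_mem hAne hAbdd
  have ht₀Icc : t₀ ∈ Set.Icc 0 l := ht₀A.1
  have ht₀ge : 2*r ≤ dist (γ t₀) x := ht₀A.2
  have hbefore : ∀ t ∈ Set.Icc 0 l, t < t₀ → dist (γ t) x < 2*r := by
    intro t ht htlt
    by_contra h
    push_neg at h
    exact absurd (csInf_le hAbdd ⟨ht, h⟩) (not_le.2 htlt)
  have hdist0 : dist (γ 0) x < r := by rw [hγ0]; rwa [Metric.mem_ball] at hyball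
  have ht₀pos : 0 < t₀ := by
    rcases lt_or_eq_of_le ht₀Icc.1 with h | h
    · exact h
    · exfalso
      have := ht₀ge
      rw [← h] at this
      linarith
  have hle : dist (γ t₀) x ≤ 2*r := by
    apply le_of_forall_pos_le_add
    intro ε hε
    set t := t₀ - min ε t₀ / 2 with htdef
    have hmin : 0 < min ε t₀ := lt_min hε ht₀pos
    have htlt : t < t₀ := by simp only [htdef]; linarith
    have ht0 : 0 ≤ t := by
      have : min ε t₀ ≤ t₀ := min_le_right _ _
      simp only [htdef]; linarith
    have htIcc : t ∈ Set.Icc 0 l := ⟨ht0, le_trans (le_of_lt htlt) ht₀Icc.2⟩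
    have h1 : dist (γ t₀) (γ t) ≤ t₀ - t := by
      have := hlip.dist_le_mul t₀ ht₀Icc t htIcc
      rw [Real.dist_eq, abs_of_nonneg (by linarith : (0:ℝ) ≤ t₀ - t)] at this
      simpa using this
    have h2 : dist (γ t) x < 2*r := hbefore t htIcc htlt
    have h3 : t₀ - t ≤ ε := by
      have : min ε t₀ ≤ ε := min_le_left _ _
      simp only [htdef]; linarith
    calc dist (γ t₀) x ≤ dist (γ t₀) (γ t) + dist (γ t) x := dist_triangle _ _ _
      _ ≤ 2*r + ε := by linarith
  set z := γ t₀ with hz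
  refine ⟨z, hle, ?_⟩
  have ht₀r : r ≤ t₀ := by
    have h1 : dist (γ t₀) (γ 0) ≤ t₀ := by
      have := hlip.dist_le_mul t₀ ht₀Icc 0 ⟨le_refl 0, hl0⟩
      rw [Real.dist_eq, sub_zero, abs_of_nonneg ht₀Icc.1] at this
      simpa using this
    have h2 : dist (γ t₀) x ≤ dist (γ t₀) (γ 0) + dist (γ 0) x := dist_triangle _ _ _
    linarith
  have hinf : r / CΩ ≤ Metric.infDist z Ωᶜ := by
    have := hJohnCond t₀ ht₀Icc
    rw [div_le_iff₀ hCΩ0]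
    calc r ≤ t₀ := ht₀r
      _ ≤ CΩ * Metric.infDist (γ t₀) Ωᶜ := this
      _ = Metric.infDist z Ωᶜ * CΩ := by rw [hz]; ring
  have hballΩ : Metric.ball z (r/CΩ) ⊆ Ω := by
    intro u hu
    by_contra huc
    have : Metric.infDist z Ωᶜ ≤ dist z u := Metric.infDist_le_dist_of_mem huc
    rw [Metric.mem_ball, dist_comm] at hu
    linarith
  have hball3 : Metric.ball z (r/CΩ) ⊆ Metric.ball x (3*r) := by
    intro u hu
    rw [Metric.mem_ball] at hu ⊢
    have hrC : r / CΩ ≤ r := by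
      rw [div_le_iff₀ hCΩ0]; nlinarith
    calc dist u x ≤ dist u z + dist z x := dist_triangle _ _ _
      _ < r/CΩ + 2*r := by linarith
      _ ≤ 3*r := by linarith
  have hballF : Metric.ball z (r/CΩ) ⊆ Metric.ball x (3*r) ∩ Ω :=
    fun u hu => ⟨hball3 hu, hballΩ hu⟩
  have hcurve : γ '' Set.Icc 0 t₀ ⊆ Metric.ball x (3*r) ∩ Ω := by
    rintro _ ⟨t, ht, rfl⟩
    have htIcc : t ∈ Set.Icc 0 l := ⟨ht.1, le_trans ht.2 ht₀Icc.2⟩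
    refine ⟨?_, hγΩ t htIcc⟩
    rw [Metric.mem_ball]
    rcases lt_or_eq_of_le ht.2 with h | h
    · have := hbefore t htIcc h; linarith
    · rw [h]; calc dist (γ t₀) x ≤ 2*r := hle
        _ < 3*r := by linarith
  have hzC : z ∈ C := by
    rw [hCeq']
    have hconn : IsPreconnected (γ '' Set.Icc 0 t₀) :=
      (isPreconnected_Icc).image γ (hlip.continuousOn.mono (Set.Icc_subset_Icc_right ht₀Icc.2))
    have := hconn.subset_connectedComponentIn
      (x := y) ⟨0, ⟨le_refl 0, le_of_lt ht₀pos⟩, hγ0⟩ hcurve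
    exact this ⟨t₀, ⟨le_of_lt ht₀pos, le_refl _⟩, rfl⟩
  have hkey : Metric.ball z ((r/CΩ) / L) ⊆ connectedComponentIn (Metric.ball x (3*r) ∩ Ω) z :=
    qc_ball_subset_component hL hqc hballF
  have hzeq : connectedComponentIn (Metric.ball x (3*r) ∩ Ω) z = C := by
    rw [hCeq']
    exact (connectedComponentIn_eq (hCeq' ▸ hzC)).symm
  have hreq : r/(L*CΩ) = (r/CΩ)/L := by rw [div_div, mul_comm]
  rw [hreq]
  rw [hzeq] at hkey
  exact hkey

lemma count_bound {X : Type*} [MetricSpace X] [MeasurableSpace X] [BorelSpace X]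
    (μ : MeasureTheory.Measure X) (Cμ L CΩ : ℝ)
    (hCμ : 1 ≤ Cμ) (hL : 1 ≤ L) (hCΩ : 1 ≤ CΩ)
    (hball : ∀ (x : X) (ρ : ℝ), 0 < ρ →
      0 < μ (Metric.ball x ρ) ∧ μ (Metric.ball x ρ) < ⊤)
    (hdbl : ∀ (x : X) (ρ : ℝ), 0 < ρ →
      μ (Metric.ball x (2 * ρ)) ≤ ENNReal.ofReal Cμ * μ (Metric.ball x ρ))
    (x : X) (r : ℝ) (hr : 0 < r)
    (S : Set (Set X))
    (hdisjS : ∀ C ∈ S, ∀ C' ∈ S, C ≠ C' → Disjoint C C')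
    (hctr : ∀ C ∈ S, ∃ z : X, dist z x ≤ 2*r ∧ Metric.ball z (r/(L*CΩ)) ⊆ C)
    (hsub : ∀ C ∈ S, C ⊆ Metric.ball x (3*r)) :
    S.Finite ∧ S.ncard ≤ ⌊Cμ ^ 2 * (3*L*CΩ) ^ Real.logb 2 Cμ⌋₊ := by
  have hL0 : (0:ℝ) < L := lt_of_lt_of_le one_pos hL
  have hC0 : (0:ℝ) < CΩ := lt_of_lt_of_le one_pos hCΩ
  have hCμ0 : (0:ℝ) < Cμ := lt_of_lt_of_le one_pos hCμ
  set ρ : ℝ := r/(L*CΩ) with hρdef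
  have hρ : 0 < ρ := by positivity
  set k : ℕ := ⌈Real.logb 2 (6*L*CΩ)⌉₊ with hkdef
  have h6pos : (0:ℝ) < 6*L*CΩ := by positivity
  have h2k : 6*L*CΩ ≤ (2:ℝ)^k := by
    calc (6*L*CΩ) = (2:ℝ) ^ Real.logb 2 (6*L*CΩ) :=
          (Real.rpow_logb two_pos (by norm_num) h6pos).symm
      _ ≤ (2:ℝ) ^ ((k:ℕ):ℝ) :=
          Real.rpow_le_rpow_of_exponent_le one_le_two (Nat.le_ceil _)
      _ = (2:ℝ) ^ k := Real.rpow_natCast _ _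
  have h2kρ : 6*r ≤ (2:ℝ)^k * ρ := by
    have h1 : (6*L*CΩ) * ρ ≤ (2:ℝ)^k * ρ := mul_le_mul_of_nonneg_right h2k (le_of_lt hρ)
    have h2 : (6*L*CΩ) * ρ = 6*r := by rw [hρdef]; field_simp
    linarith
  classical
  set zf : Set X → X := fun C => if h : C ∈ S then (hctr C h).choose else x with hzfdef
  have hzf : ∀ C, C ∈ S → dist (zf C) x ≤ 2*r ∧ Metric.ball (zf C) ρ ⊆ C := by
    intro C h
    simp only [hzfdef, dif_pos h]
    exact (hctr C h).choose_spec
  have hfin_bound : ∀ T : Finset (Set X), ↑T ⊆ S →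
      T.card ≤ ⌊Cμ ^ 2 * (3*L*CΩ) ^ Real.logb 2 Cμ⌋₊ := by
    intro T hT
    apply Nat.le_floor
    have hμx := hball x (3*r) (by linarith)
    have hK : ∀ C ∈ T, μ (Metric.ball x (3*r)) ≤
        (ENNReal.ofReal Cμ)^k * μ (Metric.ball (zf C) ρ) := by
      intro C hC
      have hz := hzf C (hT hC)
      have hsub2 : Metric.ball x (3*r) ⊆ Metric.ball (zf C) ((2:ℝ)^k * ρ) := by
        intro w hw
        rw [Metric.mem_ball] at hw ⊢
        calc dist w (zf C) ≤ dist w x + dist x (zf C) := dist_triangle _ _ _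
          _ < 3*r + 2*r := by rw [dist_comm x (zf C)]; linarith [hz.1]
          _ ≤ (2:ℝ)^k * ρ := by linarith
      calc μ (Metric.ball x (3*r)) ≤ μ (Metric.ball (zf C) ((2:ℝ)^k * ρ)) :=
            MeasureTheory.measure_mono hsub2
        _ ≤ (ENNReal.ofReal Cμ)^k * μ (Metric.ball (zf C) ρ) := aux_dbl_iter μ Cμ hdbl k _ ρ hρ
    have hdisj : (↑T : Set (Set X)).PairwiseDisjoint (fun C => Metric.ball (zf C) ρ) := by
      intro C hC C' hC' hne
      exact Disjoint.mono (hzf C (hT hC)).2 (hzf C' (hT hC')).2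
        (hdisjS C (hT hC) C' (hT hC') hne)
    have hsum : ∑ C ∈ T, μ (Metric.ball (zf C) ρ) ≤ μ (Metric.ball x (3*r)) := by
      rw [← MeasureTheory.measure_biUnion_finset hdisj (fun C _ => measurableSet_ball)]
      apply MeasureTheory.measure_mono
      rw [Set.iUnion₂_subset_iff]
      intro C hC
      exact ((hzf C (hT hC)).2).trans (hsub C (hT hC))
    have hcard : (T.card : ENNReal) * μ (Metric.ball x (3*r)) ≤
        (ENNReal.ofReal Cμ)^k * μ (Metric.ball x (3*r)) := by
      calc (T.card : ENNReal) * μ (Metric.ball x (3*r))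
          = ∑ _C ∈ T, μ (Metric.ball x (3*r)) := by rw [Finset.sum_const, nsmul_eq_mul]
        _ ≤ ∑ C ∈ T, (ENNReal.ofReal Cμ)^k * μ (Metric.ball (zf C) ρ) := Finset.sum_le_sum hK
        _ = (ENNReal.ofReal Cμ)^k * ∑ C ∈ T, μ (Metric.ball (zf C) ρ) := by
            rw [Finset.mul_sum]
        _ ≤ (ENNReal.ofReal Cμ)^k * μ (Metric.ball x (3*r)) := mul_le_mul_right hsum _
    have h1 : (T.card : ENNReal) ≤ (ENNReal.ofReal Cμ)^k := by
      rw [← ENNReal.mul_le_mul_iff_left hμx.1.ne' hμx.2.ne]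
      exact hcard
    have h2 : (T.card : ℝ) ≤ Cμ ^ k := by
      rw [← ENNReal.ofReal_natCast, ← ENNReal.ofReal_pow (le_of_lt hCμ0)] at h1
      exact (ENNReal.ofReal_le_ofReal_iff (by positivity)).1 h1
    exact le_trans h2 (aux_arith Cμ L CΩ hCμ hL hCΩ)
  have hSfin : S.Finite := by
    by_contra hinf
    obtain ⟨T, hTs, hTcard⟩ := (Set.Infinite.exists_subset_card_eq hinf)
      (⌊Cμ ^ 2 * (3*L*CΩ) ^ Real.logb 2 Cμ⌋₊ + 1)
    have := hfin_bound T hTs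
    omega
  refine ⟨hSfin, ?_⟩
  have := hfin_bound hSfin.toFinset (by simp)
  rwa [Set.ncard_eq_toFinset_card S hSfin]

lemma main_count {X : Type*} [MetricSpace X]
    [MeasurableSpace X] [BorelSpace X]
    (μ : MeasureTheory.Measure X) (Cμ L CΩ : ℝ)
    (hCμ : 1 ≤ Cμ) (hL : 1 ≤ L)
    (hball : ∀ (x : X) (ρ : ℝ), 0 < ρ →
      0 < μ (Metric.ball x ρ) ∧ μ (Metric.ball x ρ) < ⊤)
    (hdbl : ∀ (x : X) (ρ : ℝ), 0 < ρ →
      μ (Metric.ball x (2 * ρ)) ≤ ENNReal.ofReal Cμ * μ (Metric.ball x ρ))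
    (hqc : QuasiconvexWith X L)
    (Ω : Set X) (x₀ : X) (hJohn : JohnDomain Ω x₀ CΩ)
    (x : X) (r : ℝ) (hr : 0 < r) (hx₀ : x₀ ∉ Metric.ball x (3 * r)) :
    {C : Set X | (∃ y ∈ Metric.ball x (3 * r) ∩ Ω,
        C = connectedComponentIn (Metric.ball x (3 * r) ∩ Ω) y) ∧
        (C ∩ Metric.ball x r).Nonempty}.Finite ∧
    {C : Set X | (∃ y ∈ Metric.ball x (3 * r) ∩ Ω,
        C = connectedComponentIn (Metric.ball x (3 * r) ∩ Ω) y) ∧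
        (C ∩ Metric.ball x r).Nonempty}.ncard ≤
      ⌊Cμ ^ 2 * (3 * L * CΩ) ^ Real.logb 2 Cμ⌋₊ := by
  apply count_bound μ Cμ L CΩ hCμ hL hJohn.2.1 hball hdbl x r hr
  · rintro C ⟨⟨y, hy, hCeq⟩, -⟩ C' ⟨⟨y', hy', hCeq'⟩, -⟩ hne
    rw [Set.disjoint_left]
    intro u huC huC'
    apply hne
    rw [hCeq, connectedComponentIn_eq (hCeq ▸ huC), hCeq']
    exact (connectedComponentIn_eq (hCeq' ▸ huC')).symm
  · rintro C ⟨hC, hmeet⟩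
    exact exists_center hL hqc hJohn hr hx₀ hC hmeet
  · rintro C ⟨⟨y, hy, hCeq⟩, -⟩
    rw [hCeq]
    exact (connectedComponentIn_subset _ _).trans Set.inter_subset_left

end Aux

/-- In a John domain, for `x ∈ ∂Ω` and `r > 0` with `x₀ ∉ B(x, 3r)`, the ball
`B(x, r)` meets at most `N = ⌊Cμ² (3 L CΩ)^{log₂ Cμ}⌋` components of
`B(x, 3r) ∩ Ω`; in particular `Ω` is finitely connected at every boundary
point. -/


theorem statement15 {X : Type*} [MetricSpace X] [ProperSpace X]
    [MeasurableSpace X] [BorelSpace X]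
    (μ : MeasureTheory.Measure X) (Cμ L CΩ : ℝ)
    (hCμ : 1 ≤ Cμ) (hL : 1 ≤ L)
    (hball : ∀ (x : X) (ρ : ℝ), 0 < ρ →
      0 < μ (Metric.ball x ρ) ∧ μ (Metric.ball x ρ) < ⊤)
    (hdbl : ∀ (x : X) (ρ : ℝ), 0 < ρ →
      μ (Metric.ball x (2 * ρ)) ≤ ENNReal.ofReal Cμ * μ (Metric.ball x ρ))
    (hqc : QuasiconvexWith X L)
    (Ω : Set X) (hΩ : BoundedDomain Ω)
    (x₀ : X) (hJohn : JohnDomain Ω x₀ CΩ) :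
    (∀ x ∈ frontier Ω, ∀ r : ℝ, 0 < r → x₀ ∉ Metric.ball x (3 * r) →
      {C : Set X | (∃ y ∈ Metric.ball x (3 * r) ∩ Ω,
          C = connectedComponentIn (Metric.ball x (3 * r) ∩ Ω) y) ∧
          (C ∩ Metric.ball x r).Nonempty}.Finite ∧
      {C : Set X | (∃ y ∈ Metric.ball x (3 * r) ∩ Ω,
          C = connectedComponentIn (Metric.ball x (3 * r) ∩ Ω) y) ∧
          (C ∩ Metric.ball x r).Nonempty}.ncard ≤
        ⌊Cμ ^ 2 * (3 * L * CΩ) ^ Real.logb 2 Cμ⌋₊) ∧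
    ∀ x ∈ frontier Ω, FinitelyConnectedAt Ω x := by
  have hΩopen : IsOpen Ω := hΩ.1
  have hfc : ∀ x ∈ frontier Ω, FinitelyConnectedAt Ω x := by
    intro x hx r hr
    -- x ∉ Ω and x ≠ x₀
    have hxnot : x ∉ Ω := by
      rw [hΩopen.frontier_eq] at hx
      exact hx.2
    have hd0 : 0 < dist x₀ x := by
      rw [dist_pos]
      intro h
      exact hxnot (h ▸ hJohn.1)
    set ρ : ℝ := min (r/3) (dist x₀ x / 3) with hρdef
    have hρ : 0 < ρ := lt_min (by linarith) (by linarith)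
    have h3ρr : 3 * ρ ≤ r := by
      have : ρ ≤ r/3 := min_le_left _ _
      linarith
    have hx₀ρ : x₀ ∉ Metric.ball x (3 * ρ) := by
      rw [Metric.mem_ball]
      have : ρ ≤ dist x₀ x / 3 := min_le_right _ _
      push_neg
      linarith
    set F : Set X := Metric.ball x (3 * ρ) ∩ Ω with hFdef
    set S : Set (Set X) := {C : Set X | (∃ y ∈ F, C = connectedComponentIn F y) ∧
        (C ∩ Metric.ball x ρ).Nonempty} with hSdef
    have hSfin : S.Finite :=
      (main_count μ Cμ L CΩ hCμ hL hball hdbl hqc Ω x₀ hJohn x ρ hρ hx₀ρ).1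
    have hFopen : IsOpen F := (Metric.isOpen_ball).inter hΩopen
    classical
    set G : Set X := Metric.ball x ρ ∪ ⋃₀ S with hGdef
    have hSsubF : ∀ C ∈ S, C ⊆ F := by
      rintro C ⟨⟨y, hy, hCeq⟩, -⟩
      rw [hCeq]
      exact connectedComponentIn_subset _ _
    have hGopen : IsOpen G := by
      apply (Metric.isOpen_ball).union
      apply isOpen_sUnion
      rintro C hC
      obtain ⟨⟨y, hy, hCeq⟩, -⟩ := hC
      rw [hCeq]
      exact qc_component_isOpen hL hqc hFopen y
    have hxG : x ∈ G := Or.inl (Metric.mem_ball_self hρ)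
    have hGsub : G ⊆ Metric.ball x r := by
      rintro u (hu | ⟨C, hC, huC⟩)
      · rw [Metric.mem_ball] at hu ⊢
        linarith
      · have : u ∈ F := hSsubF C hC huC
        have := this.1
        rw [Metric.mem_ball] at this ⊢
        linarith
    have hGΩ : G ∩ Ω = ⋃₀ S := by
      apply Set.Subset.antisymm
      · rintro u ⟨hu | hu, huΩ⟩
        · refine ⟨connectedComponentIn F u, ⟨⟨u, ?_, rfl⟩, ?_⟩, ?_⟩
          · refine ⟨?_, huΩ⟩
            rw [Metric.mem_ball] at hu ⊢
            linarith
          · refine ⟨u, mem_connectedComponentIn ⟨?_, huΩ⟩, hu⟩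
            rw [Metric.mem_ball] at hu ⊢
            linarith
          · apply mem_connectedComponentIn
            refine ⟨?_, huΩ⟩
            rw [Metric.mem_ball] at hu ⊢
            linarith
        · exact hu
      · intro u hu
        obtain ⟨C, hC, huC⟩ := hu
        have huF : u ∈ F := hSsubF C hC huC
        exact ⟨Or.inr ⟨C, hC, huC⟩, huF.2⟩
    refine ⟨G, hGopen, hxG, hGsub, ?_⟩
    -- components of G ∩ Ω
    set pk : Set X → X := fun C => if h : C ∈ S then h.2.some else x with hpkdef
    have hpk : ∀ C (h : C ∈ S), pk C ∈ C := by
      intro C h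
      simp only [hpkdef, dif_pos h]
      exact h.2.some_mem.1
    have himage : {D : Set X | ∃ y ∈ G ∩ Ω, D = connectedComponentIn (G ∩ Ω) y} ⊆
        (fun C => connectedComponentIn (G ∩ Ω) (pk C)) '' S := by
      rintro D ⟨y, hy, hDeq⟩
      have hy' : y ∈ ⋃₀ S := by rw [← hGΩ]; exact hy
      obtain ⟨C, hC, hyC⟩ := hy'
      refine ⟨C, hC, ?_⟩
      have hCconn : IsPreconnected C := by
        obtain ⟨⟨y₁, hy₁, hCeq⟩, -⟩ := hC
        rw [hCeq]
        exact isPreconnected_connectedComponentIn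
      have hCsub : C ⊆ G ∩ Ω := by
        rw [hGΩ]
        exact Set.subset_sUnion_of_mem hC
      have h1 : C ⊆ connectedComponentIn (G ∩ Ω) y :=
        hCconn.subset_connectedComponentIn hyC hCsub
      have h2 : pk C ∈ connectedComponentIn (G ∩ Ω) y := h1 (hpk C hC)
      rw [hDeq]
      exact (connectedComponentIn_eq h2).symm
    exact Set.Finite.subset (hSfin.image _) himage
  constructor
  · intro x hx r hr hx₀
    exact main_count μ Cμ L CΩ hCμ hL hball hdbl hqc Ω x₀ hJohn x r hr hx₀
  · exact hfc
end

section
/- If Ω is an almost John domain, then Ω is finitely connected at the boundary. -/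
open Metric Set Filter Topology

/-- The one-dimensional Hausdorff content `H¹_∞(E)`. -/
noncomputable def hausdorffContent1 {X : Type*} [MetricSpace X] (E : Set X) : ENNReal :=
  ⨅ (c : ℕ → X) (ρ : ℕ → ℝ) (_ : E ⊆ ⋃ j, Metric.ball (c j) (ρ j)),
    ∑' j, ENNReal.ofReal (ρ j)

/-- `Ω` is an almost John domain: for each `r > 0` there is a closed set
`F ⊆ closure Ω` with `H¹_∞(F) < r` such that `Ω \ F` is a John domain. -/
def AlmostJohnDomain {X : Type*} [MetricSpace X] (Ω : Set X) : Prop :=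
  ∀ r : ℝ, 0 < r → ∃ F : Set X, IsClosed F ∧ F ⊆ closure Ω ∧
    hausdorffContent1 F < ENNReal.ofReal r ∧ IsConnected (Ω \ F) ∧
    ∃ (x₀ : X) (C : ℝ), JohnDomain (Ω \ F) x₀ C

section AuxLemmas

variable {X : Type*} [MetricSpace X]

lemma qc_joined {L : ℝ} (hqc : QuasiconvexWith X L) (x y : X) :
    ∃ K : Set X, IsPreconnected K ∧ x ∈ K ∧ y ∈ K ∧
      K ⊆ Metric.closedBall x (L * dist x y) := by
  obtain ⟨l, hl0, γ, hlip, hγ0, hγl, hlL⟩ := hqc x y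
  refine ⟨γ '' Set.Icc 0 l, isPreconnected_Icc.image _ hlip.continuousOn,
    ⟨0, ⟨le_refl 0, hl0⟩, hγ0⟩, ⟨l, ⟨hl0, le_refl l⟩, hγl⟩, ?_⟩
  rintro p ⟨t, ht, rfl⟩
  have h1 : dist (γ t) (γ 0) ≤ (1 : NNReal) * dist t 0 :=
    hlip.dist_le_mul t ht 0 ⟨le_refl 0, hl0⟩
  have h2 : dist t 0 = t := by
    rw [Real.dist_eq, sub_zero, abs_of_nonneg ht.1]
  have h3 : dist (γ t) x ≤ t := by
    rw [← hγ0]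
    calc dist (γ t) (γ 0) ≤ (1 : NNReal) * dist t 0 := h1
      _ = t := by rw [h2]; norm_num
  exact mem_closedBall.mpr (h3.trans (ht.2.trans hlL))

lemma qc_locallyConnected {L : ℝ} (hL : 1 ≤ L) (hqc : QuasiconvexWith X L) :
    LocallyConnectedSpace X := by
  have hL0 : (0 : ℝ) < L := lt_of_lt_of_le one_pos hL
  rw [locallyConnectedSpace_iff_connected_subsets]
  intro x U hU
  obtain ⟨s, hs0, hsU⟩ := Metric.mem_nhds_iff.mp hU
  set V : Set X := ⋃₀ {K : Set X | IsPreconnected K ∧ x ∈ K ∧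
    K ⊆ Metric.closedBall x (s / 2)} with hVdef
  have hVU : V ⊆ U := by
    rintro p ⟨K, ⟨_, _, hK⟩, hp⟩
    exact hsU (lt_of_le_of_lt (mem_closedBall.mp (hK hp)) (by linarith))
  refine ⟨V, ?_, ?_, hVU⟩
  · refine Filter.mem_of_superset (Metric.ball_mem_nhds x (by positivity :
      (0:ℝ) < s / (2 * L))) ?_
    intro y hy
    obtain ⟨K, hKpc, hxK, hyK, hKsub⟩ := qc_joined hqc x y
    have hKcb : K ⊆ Metric.closedBall x (s / 2) := by
      refine hKsub.trans (Metric.closedBall_subset_closedBall ?_)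
      have : dist x y < s / (2 * L) := by
        rw [dist_comm]; exact mem_ball.mp hy
      calc L * dist x y ≤ L * (s / (2 * L)) := by nlinarith [dist_nonneg (x := x) (y := y)]
        _ = s / 2 := by field_simp
    exact ⟨K, ⟨hKpc, hxK, hKcb⟩, hyK⟩
  · refine isPreconnected_of_forall x ?_
    rintro p ⟨K, hK, hp⟩
    exact ⟨K, fun q hq => ⟨K, hK, hq⟩, hK.2.1, hp, hK.1⟩

lemma content_mono {E F : Set X} (h : E ⊆ F) :
    hausdorffContent1 E ≤ hausdorffContent1 F := by
  refine le_iInf fun c => le_iInf fun ρ => le_iInf fun hc => ?_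
  exact iInf_le_of_le c (iInf_le_of_le ρ (iInf_le_of_le (h.trans hc) le_rfl))

lemma content_lower {E : Set X} (hE : IsPreconnected E) {x₀ w u : X}
    (hw : w ∈ E) (hu : u ∈ E) :
    ENNReal.ofReal ((dist u x₀ - dist w x₀) / 2) ≤ hausdorffContent1 E := by
  set a := dist w x₀ with ha
  set b := dist u x₀ with hb
  refine le_iInf fun c => le_iInf fun ρ => le_iInf fun hc => ?_
  have himg : Set.Icc a b ⊆ (fun p => dist p x₀) '' E :=
    (hE.image _ ((continuous_id.dist continuous_const).continuousOn)).Icc_subset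
      ⟨w, hw, rfl⟩ ⟨u, hu, rfl⟩
  have hcover : Set.Icc a b ⊆
      ⋃ j, Set.Icc (dist (c j) x₀ - ρ j) (dist (c j) x₀ + ρ j) := by
    intro s hs
    obtain ⟨p, hp, rfl⟩ := himg hs
    obtain ⟨j, hj⟩ := Set.mem_iUnion.mp (hc hp)
    have h1 : |dist p x₀ - dist (c j) x₀| ≤ dist p (c j) := abs_dist_sub_le _ _ _
    have h2 : dist p (c j) < ρ j := Metric.mem_ball.mp hj
    obtain ⟨h3, h4⟩ := abs_le.mp (h1.trans h2.le)
    exact Set.mem_iUnion.mpr ⟨j, by constructor <;> linarith⟩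
  have hvol : ENNReal.ofReal (b - a) ≤ ∑' j, ENNReal.ofReal (2 * ρ j) := by
    calc ENNReal.ofReal (b - a) = MeasureTheory.volume (Set.Icc a b) :=
        (Real.volume_Icc).symm
      _ ≤ MeasureTheory.volume
            (⋃ j, Set.Icc (dist (c j) x₀ - ρ j) (dist (c j) x₀ + ρ j)) :=
        MeasureTheory.measure_mono hcover
      _ ≤ ∑' j, MeasureTheory.volume
            (Set.Icc (dist (c j) x₀ - ρ j) (dist (c j) x₀ + ρ j)) :=
        MeasureTheory.measure_iUnion_le _
      _ = ∑' j, ENNReal.ofReal (2 * ρ j) := by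
        refine tsum_congr fun j => ?_
        rw [Real.volume_Icc]
        congr 1
        ring
  have h2T : ∑' j, ENNReal.ofReal (2 * ρ j) = 2 * ∑' j, ENNReal.ofReal (ρ j) := by
    rw [← ENNReal.tsum_mul_left]
    refine tsum_congr fun j => ?_
    rw [ENNReal.ofReal_mul (by norm_num : (0:ℝ) ≤ 2)]
    norm_num
  rw [h2T] at hvol
  have hhalf : ENNReal.ofReal ((b - a) / 2) = ENNReal.ofReal (b - a) / 2 := by
    rw [ENNReal.ofReal_div_of_pos (by norm_num : (0:ℝ) < 2)]
    norm_num
  rw [hhalf]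
  rw [ENNReal.div_le_iff_le_mul (Or.inl (by norm_num)) (Or.inl (by norm_num))]
  calc ENNReal.ofReal (b - a) ≤ 2 * ∑' j, ENNReal.ofReal (ρ j) := hvol
    _ = (∑' j, ENNReal.ofReal (ρ j)) * 2 := mul_comm _ _

lemma doubling_pow [MeasurableSpace X] {μ : MeasureTheory.Measure X} {Cμ : ℝ}
    (hdbl : ∀ (x : X) (ρ : ℝ), 0 < ρ →
      μ (Metric.ball x (2 * ρ)) ≤ ENNReal.ofReal Cμ * μ (Metric.ball x ρ)) :
    ∀ (k : ℕ) (x : X) (ρ : ℝ), 0 < ρ →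
      μ (Metric.ball x (2 ^ k * ρ)) ≤ (ENNReal.ofReal Cμ) ^ k * μ (Metric.ball x ρ) := by
  intro k
  induction k with
  | zero => intro x ρ _; simp
  | succ k ih =>
    intro x ρ h
    have heq : (2:ℝ) ^ (k+1) * ρ = 2 * (2 ^ k * ρ) := by ring
    rw [heq]
    calc μ (Metric.ball x (2 * (2 ^ k * ρ)))
        ≤ ENNReal.ofReal Cμ * μ (Metric.ball x (2 ^ k * ρ)) := hdbl x _ (by positivity)
      _ ≤ ENNReal.ofReal Cμ * ((ENNReal.ofReal Cμ) ^ k * μ (Metric.ball x ρ)) :=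
        mul_le_mul_right (ih x ρ h) _
      _ = (ENNReal.ofReal Cμ) ^ (k+1) * μ (Metric.ball x ρ) := by ring

lemma comp_eq_of_closure_subset [LocallyConnectedSpace X]
    {Ω A : Set X} (hΩo : IsOpen Ω) (hΩc : IsPreconnected Ω) (hA : IsOpen A)
    {w : X} (hw : w ∈ A ∩ Ω)
    (hcl : closure (connectedComponentIn (A ∩ Ω) w) ⊆ A) :
    connectedComponentIn (A ∩ Ω) w = Ω := by
  set V := connectedComponentIn (A ∩ Ω) w with hVdef
  have hVo : IsOpen V := (hA.inter hΩo).connectedComponentIn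
  have hVsub : V ⊆ A ∩ Ω := connectedComponentIn_subset _ _
  have hkey : ∀ q ∈ Ω, q ∈ closure V → q ∈ V := by
    intro q hqΩ hqcl
    have hqAΩ : q ∈ A ∩ Ω := ⟨hcl hqcl, hqΩ⟩
    have hWo : IsOpen (connectedComponentIn (A ∩ Ω) q) :=
      (hA.inter hΩo).connectedComponentIn
    obtain ⟨y, hyW, hyV⟩ := _root_.mem_closure_iff.mp hqcl _ hWo
      (mem_connectedComponentIn hqAΩ)
    have h1 : connectedComponentIn (A ∩ Ω) q = connectedComponentIn (A ∩ Ω) y :=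
      connectedComponentIn_eq hyW
    have h2 : V = connectedComponentIn (A ∩ Ω) y := connectedComponentIn_eq hyV
    rw [h2, ← h1]
    exact mem_connectedComponentIn hqAΩ
  have hsub : Ω ⊆ V := by
    refine hΩc.subset_left_of_subset_union hVo isClosed_closure.isOpen_compl
      (disjoint_compl_right.mono_left subset_closure) ?_
      ⟨w, hw.2, mem_connectedComponentIn hw⟩
    intro q hq
    by_cases h : q ∈ closure V
    · exact Or.inl (hkey q hq h)
    · exact Or.inr h
  exact le_antisymm (hVsub.trans Set.inter_subset_right) hsub

lemma finite_of_disjoint_balls [MeasurableSpace X] [BorelSpace X]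
    (μ : MeasureTheory.Measure X) {Cμ : ℝ} (hCμ : 1 ≤ Cμ)
    (hdbl : ∀ (x : X) (ρ : ℝ), 0 < ρ →
      μ (Metric.ball x (2 * ρ)) ≤ ENNReal.ofReal Cμ * μ (Metric.ball x ρ))
    {x₀ : X} {δ ρ₀ : ℝ} (hδ : 0 < δ) (hρ₀ : 0 < ρ₀) (hρδ : ρ₀ ≤ δ)
    (hM0 : 0 < μ (Metric.ball x₀ (2 * δ)))
    (hMT : μ (Metric.ball x₀ (2 * δ)) < ⊤)
    (𝒱 : Set (Set X)) (hdisj : 𝒱.PairwiseDisjoint id)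
    (hb : ∀ U ∈ 𝒱, ∃ p, p ∈ Metric.ball x₀ δ ∧ Metric.ball p ρ₀ ⊆ U) :
    𝒱.Finite := by
  rcases isEmpty_or_nonempty X with hX | hX
  · exact Set.toFinite 𝒱
  obtain ⟨k, hk⟩ := pow_unbounded_of_one_lt (3 * δ / ρ₀) (by norm_num : (1:ℝ) < 2)
  have hk3 : 3 * δ ≤ 2 ^ k * ρ₀ := by
    rw [div_lt_iff₀ hρ₀] at hk
    linarith
  choose! p hp1 hp2 using hb
  set M := μ (Metric.ball x₀ (2 * δ)) with hMdef
  set Ck := (ENNReal.ofReal Cμ) ^ k with hCkdef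
  have hCk0 : Ck ≠ 0 := by
    apply pow_ne_zero
    intro h
    have : (1:ENNReal) ≤ ENNReal.ofReal Cμ := ENNReal.one_le_ofReal.mpr hCμ
    rw [h] at this
    exact (not_le.mpr zero_lt_one) this
  have hCkT : Ck ≠ ⊤ := by
    apply ENNReal.pow_ne_top
    exact ENNReal.ofReal_ne_top
  set m := M / Ck with hmdef
  have hm0 : m ≠ 0 := (ENNReal.div_pos hM0.ne' hCkT).ne'
  have hmT : m ≠ ⊤ := (ENNReal.div_lt_top hMT.ne hCk0).ne
  have key : ∀ U ∈ 𝒱, m ≤ μ (Metric.ball (p U) ρ₀) := by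
    intro U hU
    have hsub : Metric.ball x₀ (2 * δ) ⊆ Metric.ball (p U) (2 ^ k * ρ₀) := by
      intro q hq
      have h1 : dist q x₀ < 2 * δ := mem_ball.mp hq
      have h2 : dist x₀ (p U) < δ := by rw [dist_comm]; exact mem_ball.mp (hp1 U hU)
      rw [mem_ball]
      calc dist q (p U) ≤ dist q x₀ + dist x₀ (p U) := dist_triangle _ _ _
        _ < 3 * δ := by linarith
        _ ≤ 2 ^ k * ρ₀ := hk3
    have h3 : M ≤ Ck * μ (Metric.ball (p U) ρ₀) :=
      le_trans (MeasureTheory.measure_mono hsub) (doubling_pow hdbl k (p U) ρ₀ hρ₀)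
    rw [hmdef, ENNReal.div_le_iff_le_mul (Or.inl hCk0) (Or.inl hCkT)]
    rw [mul_comm] at h3
    exact h3
  by_contra hinf
  replace hinf : 𝒱.Infinite := fun h => hinf h
  obtain ⟨n, hn⟩ := ENNReal.exists_nat_gt ((ENNReal.div_lt_top hMT.ne hm0).ne)
  have hMnm : M < n * m := by
    rwa [ENNReal.div_lt_iff (Or.inl hm0) (Or.inl hmT)] at hn
  obtain ⟨t, ht𝒱, htcard⟩ := hinf.exists_subset_card_eq n
  have hd : (↑t : Set (Set X)).PairwiseDisjoint (fun U => Metric.ball (p U) ρ₀) := by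
    intro U₁ h₁ U₂ h₂ hne
    exact (hdisj (ht𝒱 h₁) (ht𝒱 h₂) hne).mono (hp2 U₁ (ht𝒱 h₁)) (hp2 U₂ (ht𝒱 h₂))
  have hsum : ∑ U ∈ t, μ (Metric.ball (p U) ρ₀)
      = μ (⋃ U ∈ t, Metric.ball (p U) ρ₀) :=
    (MeasureTheory.measure_biUnion_finset hd fun U _ => measurableSet_ball).symm
  have hunion : (⋃ U ∈ t, Metric.ball (p U) ρ₀) ⊆ Metric.ball x₀ (2 * δ) := by
    intro q hq
    obtain ⟨U, hU, hqU⟩ := Set.mem_iUnion₂.mp hq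
    have h1 : dist q (p U) < ρ₀ := mem_ball.mp hqU
    have h2 : dist (p U) x₀ < δ := mem_ball.mp (hp1 U (ht𝒱 hU))
    rw [mem_ball]
    calc dist q x₀ ≤ dist q (p U) + dist (p U) x₀ := dist_triangle _ _ _
      _ < 2 * δ := by linarith
  have hle : (n : ENNReal) * m ≤ M := by
    calc (n : ENNReal) * m = t.card • m := by rw [htcard, nsmul_eq_mul]
      _ ≤ ∑ U ∈ t, μ (Metric.ball (p U) ρ₀) :=
        Finset.card_nsmul_le_sum t _ m fun U hU => key U (ht𝒱 hU)
      _ = μ (⋃ U ∈ t, Metric.ball (p U) ρ₀) := hsum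
      _ ≤ M := MeasureTheory.measure_mono hunion
  exact absurd hMnm (not_lt.mpr hle)

end AuxLemmas
/-- An almost John domain is finitely connected at the boundary. -/
theorem statement16 {X : Type*} [MetricSpace X] [ProperSpace X]
    [MeasurableSpace X] [BorelSpace X]
    (μ : MeasureTheory.Measure X) (Cμ L : ℝ)
    (hCμ : 1 ≤ Cμ) (hL : 1 ≤ L)
    (hball : ∀ (x : X) (ρ : ℝ), 0 < ρ →
      0 < μ (Metric.ball x ρ) ∧ μ (Metric.ball x ρ) < ⊤)
    (hdbl : ∀ (x : X) (ρ : ℝ), 0 < ρ →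
      μ (Metric.ball x (2 * ρ)) ≤ ENNReal.ofReal Cμ * μ (Metric.ball x ρ))
    (hqc : QuasiconvexWith X L)
    (Ω : Set X) (hΩ : BoundedDomain Ω) (hAJ : AlmostJohnDomain Ω) :
    ∀ x ∈ frontier Ω, FinitelyConnectedAt Ω x := by
  intro x₀ _hx₀ r hr
  haveI : LocallyConnectedSpace X := qc_locallyConnected hL hqc
  obtain ⟨hΩo, hΩconn, _hΩbdd, _hΩne⟩ := hΩ
  have hL0 : (0:ℝ) < L := lt_of_lt_of_le one_pos hL
  set δ : ℝ := r / 2 with hδdef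
  have hδ : 0 < δ := by positivity
  have hδr : δ < r := by rw [hδdef]; linarith
  obtain ⟨F, _hFcl, _hFsub, hFcont, _hDconn, z, C, hJD⟩ := hAJ (δ/64) (by positivity)
  obtain ⟨hzD, hC1, hJohn⟩ := hJD
  have hC0 : (0:ℝ) < C := lt_of_lt_of_le one_pos hC1
  by_cases hq : ∃ q ∈ Ω, q ∉ Metric.ball x₀ (5/8 * δ)
  · -- main case
    obtain ⟨q, hqΩ, hqout⟩ := hq
    set BB : Set X := Metric.ball x₀ δ ∩ Ω with hBBdef
    have hBBo : IsOpen BB := isOpen_ball.inter hΩo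
    set 𝒰 : Set (Set X) :=
      {U | ∃ w ∈ Metric.ball x₀ (δ/2) ∩ Ω, U = connectedComponentIn BB w} with h𝒰def
    have hmain : ∀ U ∈ 𝒰, z ∉ U →
        ∃ p, p ∈ Metric.ball x₀ δ ∧ Metric.ball p (δ/(8*C*L)) ⊆ U := by
      rintro U ⟨w, hw, rfl⟩ hz
      have hwa : w ∈ Metric.ball x₀ (5/8*δ) ∩ Ω :=
        ⟨ball_subset_ball (by linarith) hw.1, hw.2⟩
      set V := connectedComponentIn (Metric.ball x₀ (5/8*δ) ∩ Ω) w with hVdef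
      have hVsub : V ⊆ Metric.ball x₀ (5/8*δ) ∩ Ω := connectedComponentIn_subset _ _
      have hVBB : V ⊆ BB :=
        hVsub.trans (Set.inter_subset_inter_left _ (ball_subset_ball (by linarith)))
      have hVU : V ⊆ connectedComponentIn BB w :=
        isPreconnected_connectedComponentIn.subset_connectedComponentIn
          (mem_connectedComponentIn ⟨ball_subset_ball (by linarith) hw.1, hw.2⟩) hVBB
      have hesc : ∃ u ∈ V, 9/16*δ < dist u x₀ := by
        by_contra hno
        push_neg at hno
        have hcl : closure V ⊆ Metric.ball x₀ (5/8*δ) := by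
          refine (closure_minimal ?_ Metric.isClosed_closedBall).trans
            (closedBall_subset_ball (by linarith : (9:ℝ)/16*δ < 5/8*δ))
          intro u hu
          exact mem_closedBall.mpr (hno u hu)
        have hVΩ : V = Ω :=
          comp_eq_of_closure_subset hΩo hΩconn.isPreconnected isOpen_ball hwa hcl
        exact hqout (hVsub (hVΩ ▸ hqΩ)).1
      obtain ⟨u, huV, hu⟩ := hesc
      have hwV : w ∈ V := mem_connectedComponentIn hwa
      have hVnF : ¬ V ⊆ F := by
        intro hsub
        have hwd : dist w x₀ < δ/2 := mem_ball.mp hw.1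
        have hclw := content_lower (x₀ := x₀) (E := V)
          isPreconnected_connectedComponentIn hwV huV
        have h1 : ENNReal.ofReal (δ/32) ≤ hausdorffContent1 V :=
          le_trans (ENNReal.ofReal_le_ofReal (by linarith)) hclw
        have h2 := lt_of_le_of_lt (h1.trans (content_mono hsub)) hFcont
        rw [ENNReal.ofReal_lt_ofReal_iff (by positivity)] at h2
        linarith
      obtain ⟨y, hyV, hyF⟩ := Set.not_subset.mp hVnF
      have hyΩ : y ∈ Ω := (hVsub hyV).2
      have hyD : y ∈ Ω \ F := ⟨hyΩ, hyF⟩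
      have hy58 : dist y x₀ < 5/8*δ := mem_ball.mp (hVsub hyV).1
      obtain ⟨l, hl0, γ, hγlip, hγD, hγ0, hγl, hγJ⟩ := hJohn y hyD
      have hyU : y ∈ connectedComponentIn BB w := hVU hyV
      have hUy : connectedComponentIn BB w = connectedComponentIn BB y :=
        connectedComponentIn_eq hyU
      have hseg : ∀ t₁, 0 ≤ t₁ → t₁ ≤ l → t₁ ≤ δ/8 →
          γ '' Set.Icc 0 t₁ ⊆ connectedComponentIn BB w := by
        intro t₁ h0 h1 h2
        rw [hUy]
        refine IsPreconnected.subset_connectedComponentIn ?_ ?_ ?_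
        · exact isPreconnected_Icc.image _
            (hγlip.continuousOn.mono (Set.Icc_subset_Icc le_rfl h1))
        · exact ⟨0, ⟨le_refl 0, h0⟩, hγ0⟩
        · rintro p ⟨t, ht, rfl⟩
          have htl : t ∈ Set.Icc 0 l := ⟨ht.1, ht.2.trans h1⟩
          have hD : γ t ∈ Ω \ F := hγD t htl
          have hdist : dist (γ t) y ≤ t := by
            have hh := hγlip.dist_le_mul t htl 0 ⟨le_refl 0, hl0⟩
            rw [hγ0] at hh
            calc dist (γ t) y ≤ (1:NNReal) * dist t 0 := hh
              _ = t := by rw [Real.dist_eq, sub_zero, abs_of_nonneg ht.1]; norm_num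
          refine ⟨mem_ball.mpr ?_, hD.1⟩
          have ht2 : t ≤ δ/8 := ht.2.trans h2
          calc dist (γ t) x₀ ≤ dist (γ t) y + dist y x₀ := dist_triangle _ _ _
            _ < δ := by linarith
      by_cases hl8 : l < δ/8
      · exfalso
        have hz' : γ l ∈ connectedComponentIn BB w :=
          hseg l hl0 le_rfl hl8.le ⟨l, ⟨hl0, le_rfl⟩, rfl⟩
        rw [hγl] at hz'
        exact hz hz'
      · push_neg at hl8
        have h8l : (0:ℝ) ≤ δ/8 := by positivity
        have hpU : γ (δ/8) ∈ connectedComponentIn BB w :=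
          hseg (δ/8) h8l hl8 le_rfl ⟨δ/8, ⟨h8l, le_rfl⟩, rfl⟩
        have hinf : δ/(8*C) ≤ Metric.infDist (γ (δ/8)) (Ω \ F)ᶜ := by
          have hJ := hγJ (δ/8) ⟨h8l, hl8⟩
          rw [div_le_iff₀ (by positivity : (0:ℝ) < 8*C)]
          nlinarith [Metric.infDist_nonneg (x := γ (δ/8)) (s := (Ω \ F)ᶜ)]
        have hballD : Metric.ball (γ (δ/8)) (δ/(8*C)) ⊆ Ω \ F := by
          intro q' hq'
          by_contra hq'n
          have h1 : Metric.infDist (γ (δ/8)) (Ω \ F)ᶜ ≤ dist (γ (δ/8)) q' :=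
            Metric.infDist_le_dist_of_mem (show q' ∈ (Ω \ F)ᶜ from hq'n)
          have h2 : dist (γ (δ/8)) q' < δ/(8*C) := mem_ball'.mp hq'
          linarith
        have hdisty : dist (γ (δ/8)) y ≤ δ/8 := by
          have hh := hγlip.dist_le_mul (δ/8) ⟨h8l, hl8⟩ 0 ⟨le_refl 0, hl0⟩
          rw [hγ0] at hh
          calc dist (γ (δ/8)) y ≤ (1:NNReal) * dist (δ/8) 0 := hh
            _ = δ/8 := by rw [Real.dist_eq, sub_zero, abs_of_nonneg h8l]; norm_num
        have hpx : dist (γ (δ/8)) x₀ < 3/4*δ := by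
          calc dist (γ (δ/8)) x₀ ≤ dist (γ (δ/8)) y + dist y x₀ := dist_triangle _ _ _
            _ < 3/4*δ := by linarith
        refine ⟨γ (δ/8), mem_ball.mpr (by linarith), ?_⟩
        intro q' hq'
        obtain ⟨K, hKpc, hpK, hq'K, hKsub⟩ := qc_joined hqc (γ (δ/8)) q'
        have hKball : K ⊆ Metric.ball (γ (δ/8)) (δ/(8*C)) := by
          refine hKsub.trans (Metric.closedBall_subset_ball ?_)
          have hdq : dist (γ (δ/8)) q' < δ/(8*C*L) := mem_ball'.mp hq'
          have heq : L * (δ/(8*C*L)) = δ/(8*C) := by field_simp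
          calc L * dist (γ (δ/8)) q' < L * (δ/(8*C*L)) := by
                exact mul_lt_mul_of_pos_left hdq hL0
            _ = δ/(8*C) := heq
        have hCle : δ/(8*C) ≤ δ/8 := by
          rw [div_le_div_iff₀ (by positivity) (by norm_num : (0:ℝ) < 8)]
          nlinarith
        have hKBB : K ⊆ BB := by
          intro s hs
          have h1 : dist s (γ (δ/8)) < δ/(8*C) := mem_ball.mp (hKball hs)
          refine ⟨mem_ball.mpr ?_, (hballD (hKball hs)).1⟩
          calc dist s x₀ ≤ dist s (γ (δ/8)) + dist (γ (δ/8)) x₀ := dist_triangle _ _ _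
            _ < δ := by linarith
        have hKU : K ⊆ connectedComponentIn BB w := by
          rw [connectedComponentIn_eq hpU]
          exact hKpc.subset_connectedComponentIn hpK hKBB
        exact hKU hq'K
    have hdisj : 𝒰.PairwiseDisjoint id := by
      rintro U₁ ⟨w₁, hw₁, rfl⟩ U₂ ⟨w₂, hw₂, rfl⟩ hne
      simp only [Function.onFun, id]
      rw [Set.disjoint_left]
      intro a ha₁ ha₂
      exact hne (by rw [connectedComponentIn_eq ha₁, ← connectedComponentIn_eq ha₂])
    have hρ₀ : (0:ℝ) < δ/(8*C*L) := by positivity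
    have hρδ : δ/(8*C*L) ≤ δ := by
      have hCL : (1:ℝ) ≤ C * L := by nlinarith
      rw [div_le_iff₀ (by positivity)]
      nlinarith [mul_le_mul_of_nonneg_left hCL hδ.le]
    obtain ⟨hM0, hMT⟩ := hball x₀ (2*δ) (by positivity)
    have h𝒰z : {U ∈ 𝒰 | z ∉ U}.Finite :=
      finite_of_disjoint_balls μ hCμ hdbl hδ hρ₀ hρδ hM0 hMT _
        (hdisj.subset (Set.sep_subset _ _)) (fun U hU => hmain U hU.1 hU.2)
    have h𝒰fin : 𝒰.Finite := by
      refine Set.Finite.subset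
        (h𝒰z.union (Set.finite_singleton (connectedComponentIn BB z))) ?_
      intro U hU
      by_cases hzU : z ∈ U
      · right
        obtain ⟨w, hw, rfl⟩ := hU
        exact Set.mem_singleton_iff.mpr (connectedComponentIn_eq hzU)
      · exact Or.inl ⟨hU, hzU⟩
    refine ⟨Metric.ball x₀ (δ/2) ∪ ⋃₀ 𝒰, ?_, ?_, ?_, ?_⟩
    · refine IsOpen.union isOpen_ball (isOpen_sUnion ?_)
      rintro U ⟨w, hw, rfl⟩
      exact hBBo.connectedComponentIn
    · exact Or.inl (mem_ball_self (by positivity))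
    · refine Set.union_subset (ball_subset_ball (by linarith)) (Set.sUnion_subset ?_)
      rintro U ⟨w, hw, rfl⟩
      exact (connectedComponentIn_subset _ _).trans
        (Set.inter_subset_left.trans (ball_subset_ball hδr.le))
    · have hGΩ : (Metric.ball x₀ (δ/2) ∪ ⋃₀ 𝒰) ∩ Ω = ⋃₀ 𝒰 := by
        apply Set.Subset.antisymm
        · rintro y ⟨hyG, hyΩ⟩
          rcases hyG with h | h
          · exact ⟨connectedComponentIn BB y, ⟨y, ⟨h, hyΩ⟩, rfl⟩,
              mem_connectedComponentIn ⟨ball_subset_ball (by linarith) h, hyΩ⟩⟩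
          · exact h
        · rintro y ⟨U, hU, hyU⟩
          have hUBB : U ⊆ BB := by
            obtain ⟨w, hw, rfl⟩ := hU
            exact connectedComponentIn_subset _ _
          exact ⟨Or.inr ⟨U, hU, hyU⟩, (hUBB hyU).2⟩
      refine Set.Finite.subset h𝒰fin ?_
      rintro Cc ⟨y, hy, rfl⟩
      have hy' := hy
      rw [hGΩ] at hy'
      obtain ⟨U, hU𝒰, hyU⟩ := hy'
      obtain ⟨w, hw, rfl⟩ := hU𝒰
      have hcompy : connectedComponentIn BB w = connectedComponentIn BB y :=
        connectedComponentIn_eq hyU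
      have hUGΩ : connectedComponentIn BB w ⊆ (Metric.ball x₀ (δ/2) ∪ ⋃₀ 𝒰) ∩ Ω := by
        rw [hGΩ]
        exact Set.subset_sUnion_of_mem ⟨w, hw, rfl⟩
      have hsub1 : connectedComponentIn ((Metric.ball x₀ (δ/2) ∪ ⋃₀ 𝒰) ∩ Ω) y ⊆
          connectedComponentIn BB w := by
        rw [hcompy]
        refine IsPreconnected.subset_connectedComponentIn
          isPreconnected_connectedComponentIn (mem_connectedComponentIn hy) ?_
        refine (connectedComponentIn_subset _ _).trans ?_
        rw [hGΩ]
        refine Set.sUnion_subset ?_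
        rintro U' ⟨w', hw', rfl⟩
        exact connectedComponentIn_subset _ _
      have hsub2 : connectedComponentIn BB w ⊆
          connectedComponentIn ((Metric.ball x₀ (δ/2) ∪ ⋃₀ 𝒰) ∩ Ω) y :=
        IsPreconnected.subset_connectedComponentIn
          isPreconnected_connectedComponentIn hyU hUGΩ
      rw [Set.Subset.antisymm hsub1 hsub2]
      exact ⟨w, hw, rfl⟩
  · push_neg at hq
    refine ⟨Metric.ball x₀ δ, isOpen_ball, mem_ball_self hδ, ball_subset_ball hδr.le, ?_⟩
    have hGΩ : Metric.ball x₀ δ ∩ Ω = Ω := by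
      apply Set.inter_eq_right.mpr
      intro p hp
      exact ball_subset_ball (by linarith : (5:ℝ)/8*δ ≤ δ) (hq p hp)
    refine Set.Finite.subset (Set.finite_singleton Ω) ?_
    rintro Cc ⟨y, hy, rfl⟩
    rw [hGΩ] at hy ⊢
    exact Set.mem_singleton_iff.mpr (hΩconn.isPreconnected.connectedComponentIn hy)
end

section
/- If Ω is a uniform domain, then Ω is locally connected at the boundary: for every x₀ ∈ ∂Ω and every r > 0 there is an open set G ⊆ X with x₀ ∈ G ⊆ B(x₀, r) such that G ∩ Ω is connected. In fact, if C_Ω is a uniform constant for Ω and G₀ is the connected component of B(x₀, r) ∩ Ω containing some point of B(x₀, r/4C_Ω) ∩ Ω, then B(x₀, r/4C_Ω) ∩ Ω ⊆ G₀, so one may take G = G₀ ∪ B(x₀, r/4C_Ω). -/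
open Metric Set Filter Topology

/-- `Ω` is a uniform domain with uniform constant `C`. -/
def UniformDomain {X : Type*} [MetricSpace X] (Ω : Set X) (C : ℝ) : Prop :=
  1 ≤ C ∧ ∀ x ∈ Ω, ∀ y ∈ Ω, ∃ l : ℝ, 0 ≤ l ∧ ∃ γ : ℝ → X,
    LipschitzOnWith 1 γ (Set.Icc 0 l) ∧ (∀ t ∈ Set.Icc 0 l, γ t ∈ Ω) ∧
    γ 0 = x ∧ γ l = y ∧ l ≤ C * dist x y ∧
    ∀ t ∈ Set.Icc 0 l, min t (l - t) ≤ C * Metric.infDist (γ t) Ωᶜ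

lemma join_key {X : Type*} [MetricSpace X] {Ω : Set X} {C : ℝ}
    (hU : UniformDomain Ω C) {y z : X} (hy : y ∈ Ω) (hz : z ∈ Ω) :
    ∃ s : Set X, IsPreconnected s ∧ y ∈ s ∧ z ∈ s ∧ s ⊆ Ω ∧
      s ⊆ Metric.closedBall y (C * dist y z) := by
  obtain ⟨l, hl, γ, hlip, hmem, h0, hl', hlen, -⟩ := hU.2 y hy z hz
  refine ⟨γ '' Set.Icc 0 l, (isPreconnected_Icc).image γ hlip.continuousOn,
    ⟨0, ⟨le_refl 0, hl⟩, h0⟩, ⟨l, ⟨hl, le_refl l⟩, hl'⟩,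
    fun w ⟨t, ht, hw⟩ => hw ▸ hmem t ht, ?_⟩
  rintro w ⟨t, ht, rfl⟩
  have h1 : dist (γ t) (γ 0) ≤ 1 * dist t 0 :=
    hlip.dist_le_mul t ht 0 ⟨le_refl 0, hl⟩
  have : dist t 0 = t := by
    rw [Real.dist_eq, sub_zero, abs_of_nonneg ht.1]
  rw [mem_closedBall]
  calc dist (γ t) y = dist (γ t) (γ 0) := by rw [h0]
    _ ≤ t := by rw [this] at h1; linarith
    _ ≤ l := ht.2
    _ ≤ C * dist y z := hlen

private lemma aux_statement17 {X : Type*} [MetricSpace X]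
    (Ω : Set X) (hΩ : IsOpen Ω)
    (CΩ : ℝ) (hU : UniformDomain Ω CΩ) :
    ∀ x₀ ∈ frontier Ω, ∀ r : ℝ, 0 < r →
      (∀ y ∈ Metric.ball x₀ (r / (4 * CΩ)) ∩ Ω,
        Metric.ball x₀ (r / (4 * CΩ)) ∩ Ω ⊆
          connectedComponentIn (Metric.ball x₀ r ∩ Ω) y) ∧
      ∃ G : Set X, IsOpen G ∧ x₀ ∈ G ∧ G ⊆ Metric.ball x₀ r ∧
        IsConnected (G ∩ Ω) := by
  intro x₀ hx₀ r hr
  have hC : 1 ≤ CΩ := hU.1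
  have hC0 : 0 < CΩ := lt_of_lt_of_le one_pos hC
  set ρ := r / (4 * CΩ) with hρdef
  have hρ : 0 < ρ := by positivity
  have hρr : ρ ≤ r / 4 := by
    rw [hρdef, div_le_div_iff₀ (by positivity) (by norm_num)]
    nlinarith
  -- Part 1
  have part1 : ∀ y ∈ Metric.ball x₀ ρ ∩ Ω,
      Metric.ball x₀ ρ ∩ Ω ⊆ connectedComponentIn (Metric.ball x₀ r ∩ Ω) y := by
    intro y hy z hz
    obtain ⟨s, hcon, hys, hzs, hsΩ, hsb⟩ := join_key hU hy.2 hz.2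
    have hsub : s ⊆ Metric.ball x₀ r ∩ Ω := by
      intro w hw
      refine ⟨?_, hsΩ hw⟩
      have h1 : dist w y ≤ CΩ * dist y z := hsb hw
      have h2 : dist y z < 2 * ρ := by
        have := mem_ball.mp hy.1
        have := mem_ball.mp hz.1
        calc dist y z ≤ dist y x₀ + dist x₀ z := dist_triangle y x₀ z
          _ < ρ + ρ := by rw [dist_comm x₀ z]; linarith
          _ = 2 * ρ := by ring
      have hCρ : CΩ * ρ = r / 4 := by
        rw [hρdef]; field_simp
      rw [mem_ball]
      calc dist w x₀ ≤ dist w y + dist y x₀ := dist_triangle w y x₀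
        _ < CΩ * (2 * ρ) + ρ := by
            have := mem_ball.mp hy.1
            nlinarith
        _ = 2 * (CΩ * ρ) + ρ := by ring
        _ ≤ 2 * (r / 4) + r / 4 := by rw [hCρ]; linarith
        _ < r := by linarith
    exact hcon.subset_connectedComponentIn hys hsub hzs
  refine ⟨part1, ?_⟩
  -- ball x₀ ρ ∩ Ω is nonempty
  have hcl : x₀ ∈ closure Ω := frontier_subset_closure hx₀
  obtain ⟨y, hyΩ, hyd⟩ := Metric.mem_closure_iff.mp hcl ρ hρ
  have hy : y ∈ Metric.ball x₀ ρ ∩ Ω := ⟨by rwa [mem_ball, dist_comm], hyΩ⟩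
  set G₀ := connectedComponentIn (Metric.ball x₀ r ∩ Ω) y with hG₀def
  have hopen_br : IsOpen (Metric.ball x₀ r ∩ Ω) := isOpen_ball.inter hΩ
  have hG₀sub : G₀ ⊆ Metric.ball x₀ r ∩ Ω := connectedComponentIn_subset _ _
  -- G₀ is open
  have hG₀open : IsOpen G₀ := by
    rw [Metric.isOpen_iff]
    intro z hz
    obtain ⟨ε, hε, hεsub⟩ := Metric.isOpen_iff.mp hopen_br z (hG₀sub hz)
    refine ⟨ε / (2 * CΩ), by positivity, ?_⟩
    intro w hw
    have hwz : dist w z < ε / (2 * CΩ) := mem_ball.mp hw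
    have hwΩ : w ∈ Ω := by
      refine (hεsub ?_).2
      rw [mem_ball]
      calc dist w z < ε / (2 * CΩ) := hwz
        _ ≤ ε / 2 := by
            apply div_le_div_of_nonneg_left hε.le (by norm_num) (by linarith)
        _ < ε := by linarith
    obtain ⟨s, hcon, hzs, hws, hsΩ, hsb⟩ := join_key hU (hG₀sub hz).2 hwΩ
    have hsub : s ⊆ Metric.ball x₀ r ∩ Ω := by
      intro v hv
      refine hεsub ?_
      rw [mem_ball]
      have h1 : dist v z ≤ CΩ * dist z w := hsb hv
      have h2 : dist z w < ε / (2 * CΩ) := by rwa [dist_comm] at hwz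
      have : CΩ * dist z w < CΩ * (ε / (2 * CΩ)) :=
        mul_lt_mul_of_pos_left h2 hC0
      have heq : CΩ * (ε / (2 * CΩ)) = ε / 2 := by field_simp
      calc dist v z ≤ CΩ * dist z w := h1
        _ < ε / 2 := by rw [heq] at this; exact this
        _ < ε := by linarith
    have : s ⊆ connectedComponentIn (Metric.ball x₀ r ∩ Ω) z :=
      hcon.subset_connectedComponentIn hzs hsub
    have hzeq : connectedComponentIn (Metric.ball x₀ r ∩ Ω) z = G₀ :=
      (connectedComponentIn_eq hz).symm
    exact hzeq ▸ this hws
  refine ⟨G₀ ∪ Metric.ball x₀ ρ, hG₀open.union isOpen_ball,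
    Or.inr (mem_ball_self hρ), ?_, ?_⟩
  · intro w hw
    rcases hw with hw | hw
    · exact (hG₀sub hw).1
    · exact Metric.ball_subset_ball (by linarith) hw
  · have hGΩ : (G₀ ∪ Metric.ball x₀ ρ) ∩ Ω = G₀ := by
      apply Set.Subset.antisymm
      · rintro w ⟨hw | hw, hwΩ⟩
        · exact hw
        · exact part1 y hy ⟨hw, hwΩ⟩
      · intro w hw
        exact ⟨Or.inl hw, (hG₀sub hw).2⟩
    rw [hGΩ]
    exact (isConnected_connectedComponentIn_iff).mpr
      ⟨Metric.ball_subset_ball (by linarith) hy.1, hy.2⟩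

/-- A uniform domain is locally connected at the boundary: all of
`B(x₀, r/4CΩ) ∩ Ω` lies in a single component of `B(x₀, r) ∩ Ω`, and there is
an open set `G` with `x₀ ∈ G ⊆ B(x₀, r)` and `G ∩ Ω` connected. -/
theorem statement17 {X : Type*} [MetricSpace X]
    (Ω : Set X) (hΩ : BoundedDomain Ω)
    (CΩ : ℝ) (hU : UniformDomain Ω CΩ) :
    ∀ x₀ ∈ frontier Ω, ∀ r : ℝ, 0 < r →
      (∀ y ∈ Metric.ball x₀ (r / (4 * CΩ)) ∩ Ω,
        Metric.ball x₀ (r / (4 * CΩ)) ∩ Ω ⊆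
          connectedComponentIn (Metric.ball x₀ r ∩ Ω) y) ∧
      ∃ G : Set X, IsOpen G ∧ x₀ ∈ G ∧ G ⊆ Metric.ball x₀ r ∧
        IsConnected (G ∩ Ω) := by
  exact aux_statement17 Ω hΩ.1 CΩ hU
end

section
/- Assume Ω is finitely connected at x₀ ∈ ∂Ω, and suppose N = lim_{r→0} N(r) is finite, where N(r) denotes the number of connected components of B(x₀, r) ∩ Ω having x₀ in their closure. Then there exist exactly N prime chains with impression {x₀} up to equivalence: there are prime chains C¹, …, C^N, pairwise non-equivalent, each with impression {x₀}, such that every chain with impression {x₀} is equivalent to some C^j; moreover, every prime chain whose impression contains x₀ has impression {x₀} and is equivalent to some C^j. -/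
open Metric Set Filter Topology

/-- The components of `B(x₀, r) ∩ Ω` having `x₀` in their closure. -/
def boundaryComponentsAt {X : Type*} [MetricSpace X] (Ω : Set X) (x₀ : X) (r : ℝ) :
    Set (Set X) :=
  {G | (∃ y ∈ Metric.ball x₀ r ∩ Ω,
      G = connectedComponentIn (Metric.ball x₀ r ∩ Ω) y) ∧ x₀ ∈ closure G}

lemma setDist_le' {X : Type*} [MetricSpace X] {A B : Set X} {a b : X}
    (ha : a ∈ A) (hb : b ∈ B) : setDist A B ≤ dist a b :=
  csInf_le ⟨0, by rintro d ⟨x, _, y, _, rfl⟩; exact dist_nonneg⟩ ⟨a, ha, b, hb, rfl⟩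

lemma setDist_pos' {X : Type*} [MetricSpace X] {A B : Set X} {c : ℝ} (hc : 0 < c)
    (hA : A.Nonempty) (hB : B.Nonempty)
    (h : ∀ a ∈ A, ∀ b ∈ B, c ≤ dist a b) : 0 < setDist A B := by
  obtain ⟨a, ha⟩ := hA; obtain ⟨b, hb⟩ := hB
  refine lt_of_lt_of_le hc (le_csInf ⟨_, a, ha, b, hb, rfl⟩ ?_)
  rintro d ⟨x, hx, y, hy, rfl⟩
  exact h x hx y hy

lemma preconn_frontier {X : Type*} [MetricSpace X] {s t : Set X} (hs : IsPreconnected s)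
    (h1 : (s ∩ t).Nonempty) (h2 : (s \ t).Nonempty) : (s ∩ frontier t).Nonempty := by
  by_contra h
  rw [Set.not_nonempty_iff_eq_empty, Set.eq_empty_iff_forall_notMem] at h
  have hmem : ∀ x ∈ s, x ∉ frontier t := fun x hx hf => h x ⟨hx, hf⟩
  have hsub : s ⊆ interior t ∪ interior tᶜ := by
    intro x hx
    by_cases hxt : x ∈ t
    · exact Or.inl (by rw [← self_diff_frontier]; exact ⟨hxt, hmem x hx⟩)
    · refine Or.inr ?_
      rw [← self_diff_frontier, frontier_compl]
      exact ⟨hxt, hmem x hx⟩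
  obtain ⟨a, has, hat⟩ := h1
  obtain ⟨b, hbs, hbt⟩ := h2
  have ha' : a ∈ interior t := by
    rcases hsub has with h' | h'
    · exact h'
    · exact absurd (interior_subset h' : a ∈ tᶜ) (by simpa using hat)
  have hb' : b ∈ interior tᶜ := by
    rcases hsub hbs with h' | h'
    · exact absurd (interior_subset h' : b ∈ t) hbt
    · exact h'
  obtain ⟨z, hz⟩ := hs (interior t) (interior tᶜ) isOpen_interior isOpen_interior hsub
    ⟨a, has, ha'⟩ ⟨b, hbs, hb'⟩
  exact absurd (interior_subset hz.2.2 : z ∈ tᶜ) (by simpa using interior_subset hz.2.1)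

/-- If `Ω` is finitely connected at `x₀ ∈ ∂Ω` and `N = lim_{r→0} N(r)` is
finite, then up to equivalence there are exactly `N` prime chains with
impression `{x₀}`, and every prime chain whose impression contains `x₀` has
impression `{x₀}` and is equivalent to one of them. -/
theorem statement18 {X : Type*} [MetricSpace X] [ProperSpace X] [LocallyConnectedSpace X]
    (Ω : Set X) (hΩ : BoundedDomain Ω)
    (x₀ : X) (hx₀ : x₀ ∈ frontier Ω) (hfc : FinitelyConnectedAt Ω x₀)
    (N : ℕ)
    (hN : ∃ r₀ > (0 : ℝ), ∀ r : ℝ, 0 < r → r ≤ r₀ →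
      (boundaryComponentsAt Ω x₀ r).Finite ∧
      (boundaryComponentsAt Ω x₀ r).ncard = N) :
    ∃ C : Fin N → ℕ → Set X,
      (∀ j, IsPrimeChain Ω (C j) ∧ (⋂ k, closure (C j k)) = {x₀}) ∧
      (∀ i j, i ≠ j → ¬ EquivChains (C i) (C j)) ∧
      (∀ E : ℕ → Set X, IsChainIn Ω E → (⋂ k, closure (E k)) = {x₀} →
        ∃ j, EquivChains E (C j)) ∧
      (∀ E : ℕ → Set X, IsPrimeChain Ω E → x₀ ∈ ⋂ k, closure (E k) →
        (⋂ k, closure (E k)) = {x₀} ∧ ∃ j, EquivChains E (C j)) := by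
  obtain ⟨hΩo, hΩc, hΩb, hΩu⟩ := hΩ
  obtain ⟨r₀, hr₀, hNc⟩ := hN
  -- x₀ is not in Ω
  have hx₀Ω : x₀ ∉ Ω := by
    intro h
    exact hx₀.2 (by rwa [hΩo.interior_eq])
  obtain ⟨y₀, hy₀⟩ := hΩc.nonempty
  have hdy : 0 < dist x₀ y₀ := by
    rw [dist_pos]; intro h; exact hx₀Ω (h ▸ hy₀)
  -- the shrunk radius
  set R : ℝ := min r₀ (dist x₀ y₀ / 2) with hRdef
  have hR : 0 < R := lt_min hr₀ (by linarith)
  have hRr₀ : R ≤ r₀ := min_le_left _ _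
  have hRy : R < dist x₀ y₀ := lt_of_le_of_lt (min_le_right _ _) (by linarith)
  -- the radii
  set r : ℕ → ℝ := fun k => R / 2 ^ k with hrdef
  have hrpos : ∀ k, 0 < r k := fun k => div_pos hR (by positivity)
  have hrle : ∀ k, r k ≤ R := by
    intro k
    rw [hrdef]
    calc R / 2 ^ k ≤ R / 1 := by
          apply div_le_div_of_nonneg_left hR.le one_pos
          exact one_le_pow₀ (by norm_num)
      _ = R := by ring
  have hrhalf : ∀ k, r (k + 1) = r k / 2 := by
    intro k; rw [hrdef]; simp only []
    rw [pow_succ, div_div]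
  have hranti : ∀ k l, k ≤ l → r l ≤ r k := by
    intro k l hkl
    apply div_le_div_of_nonneg_left hR.le (by positivity)
    exact pow_le_pow_right₀ (by norm_num) hkl
  have hrsmall : ∀ ε : ℝ, 0 < ε → ∃ k, r k < ε := by
    intro ε hε
    obtain ⟨k, hk⟩ := pow_unbounded_of_one_lt (R / ε) (y := (2:ℝ)) (by norm_num)
    refine ⟨k, ?_⟩
    rw [div_lt_iff₀ (by positivity)]
    calc R = (R / ε) * ε := by field_simp
      _ < 2 ^ k * ε := by
          apply mul_lt_mul_of_pos_right hk hε
      _ = ε * 2 ^ k := by ring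
  have hsmall : ∀ x : X, (∀ k, dist x x₀ ≤ r k) → x = x₀ := by
    intro x hx
    by_contra hne
    have hd : 0 < dist x x₀ := dist_pos.mpr hne
    obtain ⟨k, hk⟩ := hrsmall _ hd
    exact absurd (hx k) (not_le.mpr hk)
  -- y₀ is far
  have hy₀far : ∀ k, y₀ ∉ closedBall x₀ (r k) := by
    intro k h
    rw [mem_closedBall, dist_comm] at h
    exact absurd (lt_of_le_of_lt (le_trans h (hrle k)) hRy) (lt_irrefl _)
  -- the open sets and components
  set U : ℕ → Set X := fun k => ball x₀ (r k) ∩ Ω with hUdef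
  have hUopen : ∀ k, IsOpen (U k) := fun k => isOpen_ball.inter hΩo
  have hUsub : ∀ k, U k ⊆ Ω := fun k => inter_subset_right
  have hUmono : ∀ k l, k ≤ l → U l ⊆ U k := by
    intro k l hkl
    exact inter_subset_inter_left _ (ball_subset_ball (hranti k l hkl))
  set S : ℕ → Set (Set X) := fun k => boundaryComponentsAt Ω x₀ (r k) with hSdef
  have hSmem : ∀ k G, G ∈ S k ↔
      ((∃ y ∈ U k, G = connectedComponentIn (U k) y) ∧ x₀ ∈ closure G) := by
    intro k G; rfl
  have hSfin : ∀ k, (S k).Finite := fun k => (hNc (r k) (hrpos k) (le_trans (hrle k) hRr₀)).1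
  have hScard : ∀ k, (S k).ncard = N := fun k => (hNc (r k) (hrpos k) (le_trans (hrle k) hRr₀)).2
  
  -- basic facts about members of S k
  have hSclos : ∀ k G, G ∈ S k → x₀ ∈ closure G := fun k G hG => ((hSmem k G).mp hG).2
  have hSne : ∀ k G, G ∈ S k → G.Nonempty := by
    intro k G hG
    rw [← closure_nonempty_iff]
    exact ⟨x₀, hSclos k G hG⟩
  have hSsub : ∀ k G, G ∈ S k → G ⊆ U k := by
    intro k G hG
    obtain ⟨⟨y, hy, rfl⟩, -⟩ := (hSmem k G).mp hG
    exact connectedComponentIn_subset _ _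
  have hSopen : ∀ k G, G ∈ S k → IsOpen G := by
    intro k G hG
    obtain ⟨⟨y, hy, rfl⟩, -⟩ := (hSmem k G).mp hG
    exact (hUopen k).connectedComponentIn
  have hSconn : ∀ k G, G ∈ S k → IsConnected G := by
    intro k G hG
    obtain ⟨⟨y, hy, rfl⟩, -⟩ := (hSmem k G).mp hG
    exact (isConnected_connectedComponentIn_iff).mpr hy
  have hScomp : ∀ k G, G ∈ S k → ∀ z ∈ G, G = connectedComponentIn (U k) z := by
    intro k G hG z hz
    obtain ⟨⟨y, hy, rfl⟩, -⟩ := (hSmem k G).mp hG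
    exact connectedComponentIn_eq hz
  have hSdisj : ∀ k G G', G ∈ S k → G' ∈ S k → (G ∩ G').Nonempty → G = G' := by
    intro k G G' hG hG' ⟨z, hzG, hzG'⟩
    rw [hScomp k G hG z hzG, hScomp k G' hG' z hzG']
  have habsorb : ∀ k G, G ∈ S k → ∀ D : Set X, IsPreconnected D → D ⊆ U k →
      (D ∩ G).Nonempty → D ⊆ G := by
    intro k G hG D hD hDU ⟨z, hzD, hzG⟩
    rw [hScomp k G hG z hzG]
    exact hD.subset_connectedComponentIn hzD hDU
  have hSin : ∀ k (D : Set X), D.Nonempty → IsPreconnected D → D ⊆ U k →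
      x₀ ∈ closure D → ∃ G ∈ S k, D ⊆ G := by
    intro k D ⟨z, hz⟩ hD hDU hxD
    refine ⟨connectedComponentIn (U k) z, ?_, ?_⟩
    · refine (hSmem k _).mpr ⟨⟨z, hDU hz, rfl⟩, ?_⟩
      exact closure_mono (hD.subset_connectedComponentIn hz hDU) hxD
    · exact hD.subset_connectedComponentIn hz hDU
  -- frontier facts
  have hGneΩ : ∀ k G, G ∈ S k → G ≠ Ω := by
    intro k G hG h
    have : y₀ ∈ U k := (h ▸ hSsub k G hG) hy₀
    exact hy₀far k (ball_subset_closedBall this.1)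
  have hGclosure : ∀ k G, G ∈ S k → closure G ⊆ closedBall x₀ (r k) := by
    intro k G hG
    refine subset_trans (closure_mono ?_) closure_ball_subset_closedBall
    exact fun z hz => (hSsub k G hG hz).1
  have hfrontier_dist : ∀ k G, G ∈ S k → ∀ p ∈ Ω ∩ frontier G, dist p x₀ = r k := by
    intro k G hG p ⟨hpΩ, hpf⟩
    have hfr : frontier G = closure G \ G := (hSopen k G hG).frontier_eq
    rw [hfr] at hpf
    have hle : dist p x₀ ≤ r k := hGclosure k G hG hpf.1
    refine le_antisymm hle (le_of_not_gt fun hlt => ?_)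
    -- p ∈ U k leads to p ∈ G, contradiction
    have hpU : p ∈ U k := ⟨mem_ball.mpr hlt, hpΩ⟩
    have hop : IsOpen (connectedComponentIn (U k) p) := (hUopen k).connectedComponentIn
    have hpc : p ∈ connectedComponentIn (U k) p := mem_connectedComponentIn hpU
    obtain ⟨q, hq⟩ := _root_.mem_closure_iff.mp hpf.1 _ hop hpc
    have h1 : G = connectedComponentIn (U k) q := hScomp k G hG q hq.2
    have h2 : connectedComponentIn (U k) p = connectedComponentIn (U k) q :=
      connectedComponentIn_eq hq.1
    exact hpf.2 (h1 ▸ h2 ▸ hpc)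
  have hfrontier_ne : ∀ k G, G ∈ S k → (Ω ∩ frontier G).Nonempty := by
    intro k G hG
    by_contra h
    rw [Set.not_nonempty_iff_eq_empty, Set.eq_empty_iff_forall_notMem] at h
    have hcov : Ω ⊆ G ∪ (closure G)ᶜ := by
      intro x hxΩ
      by_cases hx : x ∈ closure G
      · left
        by_contra hxG
        exact h x ⟨hxΩ, by rw [(hSopen k G hG).frontier_eq]; exact ⟨hx, hxG⟩⟩
      · exact Or.inr hx
    have h1 : (Ω ∩ G).Nonempty := by
      obtain ⟨z, hz⟩ := hSne k G hG
      exact ⟨z, hUsub k (hSsub k G hG hz), hz⟩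
    have h2 : (Ω ∩ (closure G)ᶜ).Nonempty :=
      ⟨y₀, hy₀, fun hc => hy₀far k (hGclosure k G hG hc)⟩
    obtain ⟨z, hz⟩ := hΩc.isPreconnected G (closure G)ᶜ (hSopen k G hG)
      isClosed_closure.isOpen_compl hcov h1 h2
    exact hz.2.2 (subset_closure hz.2.1)
  
  -- every member of S k contains a member of S (k+1)
  have hsurj : ∀ k G, G ∈ S k → ∃ G' ∈ S (k + 1), G' ⊆ G := by
    intro k G hG
    obtain ⟨W, hWo, hWx, hWsub, hWfin⟩ := hfc (r (k + 1)) (hrpos (k + 1))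
    set T : Set (Set X) := {D | ∃ y ∈ W ∩ Ω, D = connectedComponentIn (W ∩ Ω) y} with hTdef
    have hWU : W ∩ Ω ⊆ U (k + 1) := inter_subset_inter_left _ hWsub
    have hcl : x₀ ∈ closure (G ∩ W) := by
      rw [_root_.mem_closure_iff]
      intro o ho hxo
      obtain ⟨p, hp⟩ := _root_.mem_closure_iff.mp (hSclos k G hG) (o ∩ W) (ho.inter hWo) ⟨hxo, hWx⟩
      exact ⟨p, hp.1.1, hp.2, hp.1.2⟩
    have hsub2 : G ∩ W ⊆ ⋃ D ∈ T, (G ∩ D) := by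
      intro p ⟨hpG, hpW⟩
      have hpWΩ : p ∈ W ∩ Ω := ⟨hpW, hUsub k (hSsub k G hG hpG)⟩
      refine mem_iUnion₂.mpr ⟨connectedComponentIn (W ∩ Ω) p, ⟨p, hpWΩ, rfl⟩, hpG, ?_⟩
      exact mem_connectedComponentIn hpWΩ
    have hx2 : x₀ ∈ ⋃ D ∈ T, closure (G ∩ D) := by
      have h' := closure_mono hsub2 hcl
      rwa [hWfin.closure_biUnion] at h'
    obtain ⟨D, hDT, hxD⟩ := mem_iUnion₂.mp hx2
    obtain ⟨y, hy, rfl⟩ := hDT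
    have hDconn : IsPreconnected (connectedComponentIn (W ∩ Ω) y) :=
      isPreconnected_connectedComponentIn
    have hDU : connectedComponentIn (W ∩ Ω) y ⊆ U (k + 1) :=
      subset_trans (connectedComponentIn_subset _ _) hWU
    have hne : (G ∩ connectedComponentIn (W ∩ Ω) y).Nonempty := by
      rw [← closure_nonempty_iff]; exact ⟨x₀, hxD⟩
    -- D ⊆ G
    have hDG : connectedComponentIn (W ∩ Ω) y ⊆ G := by
      refine habsorb k G hG _ hDconn (subset_trans hDU (hUmono k (k+1) (Nat.le_succ k))) ?_
      obtain ⟨z, hz⟩ := hne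
      exact ⟨z, hz.2, hz.1⟩
    obtain ⟨G', hG', hDG'⟩ := hSin (k + 1) (connectedComponentIn (W ∩ Ω) y)
      (hne.mono inter_subset_right |>.mono (subset_refl _)) hDconn hDU
      (closure_mono inter_subset_right hxD)
    refine ⟨G', hG', ?_⟩
    refine habsorb k G hG G' (hSconn (k+1) G' hG').isPreconnected
      (subset_trans (hSsub (k+1) G' hG') (hUmono k (k+1) (Nat.le_succ k))) ?_
    obtain ⟨z, hz⟩ := hne
    exact ⟨z, hDG' hz.2, hDG hz.2⟩
  
  -- enumeration of S 0
  have henum : ∃ e : Fin N → Set X, (∀ j, e j ∈ S 0) ∧ Function.Injective e := by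
    have hfin := hSfin 0
    haveI := hfin.fintype
    have hcard : Fintype.card (S 0) = N := by
      rw [← Set.toFinset_card, ← Set.ncard_eq_toFinset_card']
      exact hScard 0
    let eq := Fintype.equivFinOfCardEq hcard
    refine ⟨fun j => (eq.symm j : Set X), fun j => (eq.symm j).2, ?_⟩
    intro i j hij
    have := Subtype.coe_injective hij
    exact eq.symm.injective this
  obtain ⟨e, hemem, heinj⟩ := henum
  -- a totalized "next" function
  have hstep : ∀ (k : ℕ) (G : Set X), ∃ G', G ∈ S k → G' ∈ S (k + 1) ∧ G' ⊆ G := by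
    intro k G
    by_cases hG : G ∈ S k
    · obtain ⟨G', hG', hsub⟩ := hsurj k G hG
      exact ⟨G', fun _ => ⟨hG', hsub⟩⟩
    · exact ⟨∅, fun h => absurd h hG⟩
  choose next hnext using hstep
  -- the nested family
  set c : ℕ → Fin N → Set X := fun k => Nat.rec e (fun k f j => next k (f j)) k with hcdef
  have hcsucc : ∀ k j, c (k + 1) j = next k (c k j) := fun k j => rfl
  have hmi : ∀ k, (∀ j, c k j ∈ S k) ∧ Function.Injective (c k) := by
    intro k
    induction k with
    | zero => exact ⟨hemem, heinj⟩
    | succ k ih =>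
      have hmem : ∀ j, c (k + 1) j ∈ S (k + 1) := fun j =>
        ((hnext k (c k j)) (ih.1 j)).1
      refine ⟨hmem, fun i j hij => ih.2 ?_⟩
      have h1 : c (k + 1) i ⊆ c k i := ((hnext k (c k i)) (ih.1 i)).2
      have h2 : c (k + 1) j ⊆ c k j := ((hnext k (c k j)) (ih.1 j)).2
      obtain ⟨z, hz⟩ := hSne (k + 1) _ (hmem i)
      exact hSdisj k _ _ (ih.1 i) (ih.1 j) ⟨z, h1 hz, h2 (by rw [← hij]; exact hz)⟩
  have hcmem : ∀ k j, c k j ∈ S k := fun k => (hmi k).1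
  have hcinj : ∀ k, Function.Injective (c k) := fun k => (hmi k).2
  have hcsub : ∀ k j, c (k + 1) j ⊆ c k j := fun k j => ((hnext k (c k j)) (hcmem k j)).2
  have hcanti : ∀ j k l, k ≤ l → c l j ⊆ c k j := by
    intro j k l hkl
    induction l, hkl using Nat.le_induction with
    | base => exact subset_refl _
    | succ l hkl ih => exact subset_trans (hcsub l j) ih
  -- surjectivity of the enumeration at every level
  have hcsurjset : ∀ k, Set.range (c k) = S k := by
    intro k
    apply Set.eq_of_subset_of_ncard_le
    · rintro G ⟨j, rfl⟩; exact hcmem k j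
    · rw [hScard k]
      have : Set.range (c k) = c k '' Set.univ := (Set.image_univ).symm
      rw [this, Set.ncard_image_of_injective _ (hcinj k), Set.ncard_univ]
      simp
    · exact hSfin k
  have hcsurj : ∀ k G, G ∈ S k → ∃ j, c k j = G := by
    intro k G hG
    rw [← hcsurjset k] at hG
    exact hG
  
  -- each c · j is a chain with impression {x₀}
  have hacc : ∀ k j, Acceptable Ω (c k j) := by
    intro k j
    have hG := hcmem k j
    refine ⟨(isBounded_ball.subset (fun z hz => (hSsub k _ hG hz).1)),
      hSconn k _ hG, fun z hz => hUsub k (hSsub k _ hG hz), hGneΩ k _ hG,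
      ⟨x₀, hSclos k _ hG, hx₀⟩⟩
  have hCimp : ∀ j, (⋂ k, closure (c k j)) = {x₀} := by
    intro j
    apply Set.eq_singleton_iff_unique_mem.mpr
    constructor
    · exact mem_iInter.mpr fun k => hSclos k _ (hcmem k j)
    · intro x hx
      apply hsmall
      intro k
      exact (hGclosure k _ (hcmem k j)) (mem_iInter.mp hx k)
  have hchain : ∀ j, IsChainIn Ω (fun k => c k j) := by
    intro j
    refine ⟨fun k => hacc k j, fun k => hcsub k j, ?_, ?_⟩
    · intro k
      refine setDist_pos' (hrpos (k + 1))
        (hfrontier_ne (k + 1) _ (hcmem (k + 1) j)) (hfrontier_ne k _ (hcmem k j)) ?_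
      intro a ha b hb
      have hda : dist a x₀ = r (k + 1) := hfrontier_dist (k + 1) _ (hcmem (k + 1) j) a ha
      have hdb : dist b x₀ = r k := hfrontier_dist k _ (hcmem k j) b hb
      have htri : dist b x₀ ≤ dist b a + dist a x₀ := dist_triangle b a x₀
      have h2 : r (k + 1) = r k - r (k + 1) := by rw [hrhalf k]; ring
      have : dist a b = dist b a := dist_comm a b
      rw [this]
      linarith [hrhalf k]
    · rw [hCimp j]
      exact fun x hx => by rw [hx]; exact hx₀
  -- general chain facts
  have hEanti : ∀ E : ℕ → Set X, IsChainIn Ω E → ∀ m l, m ≤ l → E l ⊆ E m := by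
    intro E hE m l hml
    induction l, hml using Nat.le_induction with
    | base => exact subset_refl _
    | succ l hml ih => exact subset_trans (hE.2.1 l) ih
  have hEcompact : ∀ E : ℕ → Set X, IsChainIn Ω E → ∀ m, IsCompact (closure (E m)) :=
    fun E hE m => ((hE.1 m).1).isCompact_closure
  have himp_ne : ∀ E : ℕ → Set X, IsChainIn Ω E → (⋂ m, closure (E m)).Nonempty := by
    intro E hE
    apply IsCompact.nonempty_iInter_of_sequence_nonempty_isCompact_isClosed
    · exact fun m => closure_mono (hE.2.1 m)
    · exact fun m => ((hE.1 m).2.1.nonempty).closure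
    · exact hEcompact E hE 0
    · exact fun m => isClosed_closure
  have hshrink : ∀ E : ℕ → Set X, IsChainIn Ω E → (⋂ m, closure (E m)) ⊆ {x₀} →
      ∀ ρ : ℝ, 0 < ρ → ∃ l, closure (E l) ⊆ ball x₀ ρ := by
    intro E hE himp ρ hρ
    by_contra h
    push_neg at h
    have hne : ∀ l, (closure (E l) ∩ (ball x₀ ρ)ᶜ).Nonempty := by
      intro l
      obtain ⟨z, hz1, hz2⟩ := Set.not_subset.mp (h l)
      exact ⟨z, hz1, hz2⟩
    have hcl : ∀ l, IsClosed (closure (E l) ∩ (ball x₀ ρ)ᶜ) :=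
      fun l => isClosed_closure.inter isOpen_ball.isClosed_compl
    have hsub : ∀ l, closure (E (l + 1)) ∩ (ball x₀ ρ)ᶜ ⊆ closure (E l) ∩ (ball x₀ ρ)ᶜ :=
      fun l => inter_subset_inter_left _ (closure_mono (hE.2.1 l))
    obtain ⟨x, hx⟩ := IsCompact.nonempty_iInter_of_sequence_nonempty_isCompact_isClosed
      _ hsub hne ((hEcompact E hE 0).of_isClosed_subset (hcl 0) inter_subset_left) hcl
    have hx1 : x ∈ ⋂ m, closure (E m) := mem_iInter.mpr fun m => (mem_iInter.mp hx m).1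
    have hx2 : x = x₀ := himp hx1
    exact (mem_iInter.mp hx 0).2 (by rw [hx2]; exact mem_ball_self hρ)
  
  -- key lemma: a chain through x₀ meets one family cofinally
  have hB2 : ∀ E : ℕ → Set X, IsChainIn Ω E → x₀ ∈ (⋂ m, closure (E m)) →
      ∃ j : Fin N, ∀ m k, (E m ∩ c k j).Nonempty := by
    intro E hE hx
    have hA : ∀ m k, ∃ j : Fin N, x₀ ∈ closure (E m ∩ c k j) := by
      intro m k
      obtain ⟨W, hWo, hWx, hWsub, hWfin⟩ := hfc (r k) (hrpos k)
      set T : Set (Set X) := {D | ∃ y ∈ W ∩ Ω, D = connectedComponentIn (W ∩ Ω) y} with hTdef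
      have hWU : W ∩ Ω ⊆ U k := inter_subset_inter_left _ hWsub
      have hxE : x₀ ∈ closure (E m) := mem_iInter.mp hx m
      have hcl : x₀ ∈ closure (E m ∩ W) := by
        rw [_root_.mem_closure_iff]
        intro o ho hxo
        obtain ⟨p, hp⟩ := _root_.mem_closure_iff.mp hxE (o ∩ W) (ho.inter hWo) ⟨hxo, hWx⟩
        exact ⟨p, hp.1.1, hp.2, hp.1.2⟩
      have hsub2 : E m ∩ W ⊆ ⋃ D ∈ T, (E m ∩ D) := by
        intro p ⟨hpE, hpW⟩
        have hpWΩ : p ∈ W ∩ Ω := ⟨hpW, (hE.1 m).2.2.1 hpE⟩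
        refine mem_iUnion₂.mpr ⟨connectedComponentIn (W ∩ Ω) p, ⟨p, hpWΩ, rfl⟩, hpE, ?_⟩
        exact mem_connectedComponentIn hpWΩ
      have hx2 : x₀ ∈ ⋃ D ∈ T, closure (E m ∩ D) := by
        have h' := closure_mono hsub2 hcl
        rwa [hWfin.closure_biUnion] at h'
      obtain ⟨D, hDT, hxD⟩ := mem_iUnion₂.mp hx2
      obtain ⟨y, hy, rfl⟩ := hDT
      have hDconn : IsPreconnected (connectedComponentIn (W ∩ Ω) y) :=
        isPreconnected_connectedComponentIn
      have hDU : connectedComponentIn (W ∩ Ω) y ⊆ U k :=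
        subset_trans (connectedComponentIn_subset _ _) hWU
      have hne : (E m ∩ connectedComponentIn (W ∩ Ω) y).Nonempty := by
        rw [← closure_nonempty_iff]; exact ⟨x₀, hxD⟩
      obtain ⟨z, hzE, hzD⟩ := hne
      obtain ⟨G, hG, hDG⟩ := hSin k (connectedComponentIn (W ∩ Ω) y) ⟨z, hzD⟩ hDconn hDU
        (closure_mono inter_subset_right hxD)
      obtain ⟨j, hj⟩ := hcsurj k G hG
      refine ⟨j, ?_⟩
      rw [hj]
      exact closure_mono (inter_subset_inter_right _ hDG) hxD
    choose jf hjf using fun m => hA m m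
    obtain ⟨j, hjinf⟩ := Finite.exists_infinite_fiber jf
    have hinf : (jf ⁻¹' {j}).Infinite := Set.infinite_coe_iff.mp hjinf
    refine ⟨j, fun m k => ?_⟩
    obtain ⟨m', hm', hgt⟩ := hinf.exists_gt (max m k)
    have hm'j : jf m' = j := hm'
    have hle1 : m ≤ m' := le_trans (le_max_left _ _) hgt.le
    have hle2 : k ≤ m' := le_trans (le_max_right _ _) hgt.le
    have hx' : x₀ ∈ closure (E m' ∩ c m' (jf m')) := hjf m'
    rw [hm'j] at hx'
    have hsub' : E m' ∩ c m' j ⊆ E m ∩ c k j :=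
      inter_subset_inter (hEanti E hE m m' hle1) (hcanti j k m' hle2)
    have : (E m' ∩ c m' j).Nonempty := by
      rw [← closure_nonempty_iff]; exact ⟨x₀, hx'⟩
    exact this.mono hsub'
  -- the family divides the chain
  have hB3 : ∀ E : ℕ → Set X, IsChainIn Ω E → ∀ j : Fin N,
      (∀ m k, (E m ∩ c k j).Nonempty) → Divides (fun k => c k j) E := by
    intro E hE j hmeet m
    by_contra h
    push_neg at h
    have hδ := hE.2.2.1 m
    obtain ⟨k, hk⟩ := hrsmall (setDist (Ω ∩ frontier (E (m + 1))) (Ω ∩ frontier (E m)) / 2) (by linarith)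
    have hconn : IsPreconnected (c k j) := (hSconn k _ (hcmem k j)).isPreconnected
    obtain ⟨p, hpC, hpE⟩ := Set.not_subset.mp (h k)
    have h1 : (c k j ∩ E m).Nonempty := by
      obtain ⟨z, hz⟩ := hmeet m k; exact ⟨z, hz.2, hz.1⟩
    obtain ⟨a, haC, haF⟩ := preconn_frontier hconn h1 ⟨p, hpC, hpE⟩
    have h1' : (c k j ∩ E (m + 1)).Nonempty := by
      obtain ⟨z, hz⟩ := hmeet (m + 1) k; exact ⟨z, hz.2, hz.1⟩
    have hd' : (c k j \ E (m + 1)).Nonempty := ⟨p, hpC, fun hq => hpE (hE.2.1 m hq)⟩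
    obtain ⟨b, hbC, hbF⟩ := preconn_frontier hconn h1' hd'
    have haΩ : a ∈ Ω := hUsub k (hSsub k _ (hcmem k j) haC)
    have hbΩ : b ∈ Ω := hUsub k (hSsub k _ (hcmem k j) hbC)
    have hsd : setDist (Ω ∩ frontier (E (m + 1))) (Ω ∩ frontier (E m)) ≤ dist b a :=
      setDist_le' ⟨hbΩ, hbF⟩ ⟨haΩ, haF⟩
    have hdista : dist a x₀ < r k := mem_ball.mp (hSsub k _ (hcmem k j) haC).1
    have hdistb : dist b x₀ < r k := mem_ball.mp (hSsub k _ (hcmem k j) hbC).1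
    have : dist b a ≤ dist b x₀ + dist x₀ a := dist_triangle b x₀ a
    rw [dist_comm x₀ a] at this
    linarith
  -- the chain divides the family
  have hB4 : ∀ E : ℕ → Set X, IsChainIn Ω E → (⋂ m, closure (E m)) ⊆ {x₀} →
      ∀ j : Fin N, (∀ m k, (E m ∩ c k j).Nonempty) → Divides E (fun k => c k j) := by
    intro E hE himp j hmeet k
    obtain ⟨l, hl⟩ := hshrink E hE himp (r k) (hrpos k)
    have hElU : E l ⊆ U k := fun z hz => ⟨hl (subset_closure hz), (hE.1 l).2.2.1 hz⟩
    obtain ⟨z, hzE, hzC⟩ := hmeet l k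
    have hsub : E l ⊆ connectedComponentIn (U k) z :=
      (hE.1 l).2.1.isPreconnected.subset_connectedComponentIn hzE hElU
    refine ⟨l, ?_⟩
    show E l ⊆ c k j
    rw [hScomp k _ (hcmem k j) z hzC]
    exact hsub
  -- dividing forces equality of indices
  have hdiv_eq : ∀ i j : Fin N, Divides (fun k => c k i) (fun k => c k j) → i = j := by
    intro i j h
    obtain ⟨l, hl⟩ := h 0
    obtain ⟨z, hz⟩ := hSne l _ (hcmem l i)
    exact hcinj 0 (hSdisj 0 _ _ (hcmem 0 i) (hcmem 0 j)
      ⟨z, hcanti i 0 l (Nat.zero_le l) hz, hl hz⟩)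
  -- impression of anything dividing the family
  have hdivimp : ∀ (E : ℕ → Set X) (j : Fin N), IsChainIn Ω E →
      Divides E (fun k => c k j) → (⋂ m, closure (E m)) ⊆ {x₀} := by
    intro E j hE hdiv x hx
    have : ∀ k, dist x x₀ ≤ r k := by
      intro k
      obtain ⟨l, hl⟩ := hdiv k
      have : x ∈ closure (E l) := mem_iInter.mp hx l
      have : x ∈ closure (c k j) := closure_mono hl this
      exact hGclosure k _ (hcmem k j) this
    exact hsmall x this
  
  -- assembly
  refine ⟨fun j k => c k j, ?_, ?_, ?_, ?_⟩
  · intro j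
    refine ⟨⟨hchain j, ?_⟩, hCimp j⟩
    intro F hF hdivF
    have himpF : (⋂ m, closure (F m)) ⊆ {x₀} := hdivimp F j hF hdivF
    have hxF : x₀ ∈ ⋂ m, closure (F m) := by
      obtain ⟨x, hx⟩ := himp_ne F hF
      have hx0 : x = x₀ := himpF hx
      exact hx0 ▸ hx
    obtain ⟨j', hj'⟩ := hB2 F hF hxF
    have hd1 : Divides (fun k => c k j') F := hB3 F hF j' hj'
    have hjj : j' = j := by
      refine hdiv_eq j' j (fun k => ?_)
      obtain ⟨l, hl⟩ := hdivF k
      obtain ⟨l', hl'⟩ := hd1 l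
      exact ⟨l', subset_trans hl' hl⟩
    exact ⟨hdivF, hjj ▸ hd1⟩
  · intro i j hne heq
    exact hne (hdiv_eq i j heq.1)
  · intro E hE himp
    have hx : x₀ ∈ ⋂ m, closure (E m) := by rw [himp]; rfl
    obtain ⟨j, hj⟩ := hB2 E hE hx
    exact ⟨j, hB4 E hE himp.subset j hj, hB3 E hE j hj⟩
  · intro E hEp hx
    obtain ⟨j, hj⟩ := hB2 E hEp.1 hx
    have hd1 : Divides (fun k => c k j) E := hB3 E hEp.1 j hj
    have hequiv := hEp.2 (fun k => c k j) (hchain j) hd1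
    refine ⟨Subset.antisymm (hdivimp E j hEp.1 hequiv.2) (singleton_subset_iff.mpr hx),
      j, hequiv.2, hequiv.1⟩
end
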